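/- arXiv:math-ph/0403027 — 9 statements merged into one kernel-verified Lean document; each statement's English description precedes it below -/
import Mathlib

section
/- Let v : ℝ^m × ℝ → ℝ^m be continuously differentiable and let φ : ℝ^m × ℝ → ℝ be a continuously differentiable solution of the transport equation ∂φ/∂t(x,t) + v(x,t)·∇φ(x,t) = 0 for all (x,t). Assume there is a compact set K ⊆ ℝ^m such that φ(·,t) is supported in K for every t. Then the function t ↦ ∫_{ℝ^m} φ(x,t)² dx is differentiable, with derivative d/dt ∫_{ℝ^m} φ(x,t)² dx = ∫_{ℝ^m} (div_x v)(x,t) φ(x,t)² dx. -/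
/-! Differentiating under the integral sign, which the compact support of `φ (·, s)` in `K`
justifies uniformly in `s`, gives `d/dt ∫ φ² = ∫ ∂ₜ(φ²)`. By the Leibniz rule `φ²` solves the
same transport equation, so `∂ₜ(φ²) = -v · ∇(φ²)`, and integrating by parts in each coordinate
against the compactly supported `φ²` turns `-∫ v · ∇(φ²)` into `∫ (div v) φ²`. -/

open MeasureTheory RealInnerProductSpace

/-- Spatial divergence of a time-dependent vector field on `ℝ^m`. -/
noncomputable def spatialDiv {m : ℕ}
    (v : EuclideanSpace ℝ (Fin m) × ℝ → EuclideanSpace ℝ (Fin m))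
    (x : EuclideanSpace ℝ (Fin m)) (t : ℝ) : ℝ :=
  ∑ i, fderiv ℝ (fun y => v (y, t) i) x (EuclideanSpace.single i 1)

open Set Function Filter Metric

theorem DifferentiableAt.hasDerivAt_comp_prodMk_right {E G : Type*} [NormedAddCommGroup E]
    [NormedSpace ℝ E] [NormedAddCommGroup G] [NormedSpace ℝ G] {F : E × ℝ → G} {x : E} {s : ℝ}
    (hF : DifferentiableAt ℝ F (x, s)) :
    HasDerivAt (fun s => F (x, s)) (fderiv ℝ F (x, s) (0, 1)) s :=
  hF.hasFDerivAt.comp_hasDerivAt s ((hasDerivAt_const s x).prodMk (hasDerivAt_id s))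

theorem hasDerivAt_integral_of_contDiff_of_support_subset {E : Type*} [NormedAddCommGroup E]
    [NormedSpace ℝ E] [MeasurableSpace E] [OpensMeasurableSpace E] {μ : Measure E}
    [IsFiniteMeasureOnCompacts μ] {F : E × ℝ → ℝ} (hF : ContDiff ℝ 1 F) {K : Set E}
    (hK : IsCompact K) (hsupp : ∀ s, support (fun x => F (x, s)) ⊆ K) (t : ℝ) :
    HasDerivAt (fun s => ∫ x, F (x, s) ∂μ) (∫ x, deriv (fun s => F (x, s)) t ∂μ) t := by
  set F' : E × ℝ → ℝ := fun p => fderiv ℝ F p (0, 1)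
  have hF' : ∀ x s, HasDerivAt (fun s => F (x, s)) (F' (x, s)) s := fun x s =>
    (hF.differentiable one_ne_zero _).hasDerivAt_comp_prodMk_right
  have hF'_cont : Continuous F' := (hF.continuous_fderiv one_ne_zero).clm_apply continuous_const
  have hslice : ∀ s, Continuous fun x => F (x, s) := fun s =>
    hF.continuous.comp (continuous_id.prodMk continuous_const)
  have hF_zero : ∀ x ∉ K, ∀ s, F (x, s) = 0 := fun x hx s =>
    notMem_support.1 fun h => hx (hsupp s h)
  have hF'_zero : ∀ x ∉ K, ∀ s, F' (x, s) = 0 := fun x hx s => by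
    refine (hF' x s).unique ?_
    simpa only [hF_zero x hx] using hasDerivAt_const s (0 : ℝ)
  obtain ⟨C, hC⟩ := (hK.prod (isCompact_closedBall t 1)).exists_bound_of_continuousOn
    hF'_cont.continuousOn
  have hbound : ∀ x, ∀ s ∈ ball t 1, ‖F' (x, s)‖ ≤ K.indicator (fun _ => C) x := fun x s hs => by
    by_cases hx : x ∈ K
    · rw [indicator_of_mem hx]
      exact hC (x, s) ⟨hx, ball_subset_closedBall hs⟩
    · simp [indicator_of_notMem hx, hF'_zero x hx]
  have key := hasDerivAt_integral_of_dominated_loc_of_deriv_le (μ := μ) (ball_mem_nhds t one_pos)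
    (Eventually.of_forall fun s => (hslice s).aestronglyMeasurable)
    ((hslice t).integrable_of_hasCompactSupport (HasCompactSupport.intro hK (hF_zero · · t)))
    (hF'_cont.comp (continuous_id.prodMk continuous_const)).aestronglyMeasurable
    (ae_of_all _ hbound) ((integrable_indicator_iff hK.measurableSet).2
      (integrableOn_const hK.measure_lt_top.ne)) (ae_of_all _ fun x s _ => hF' x s)
  simpa only [(hF' _ t).deriv] using key.2

theorem deriv_add_inner_gradient_sq {E : Type*} [NormedAddCommGroup E] [InnerProductSpace ℝ E]
    [CompleteSpace E] {φ : E × ℝ → ℝ} {x : E} {t : ℝ}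
    (ht : DifferentiableAt ℝ (fun s => φ (x, s)) t) (hx : DifferentiableAt ℝ (fun y => φ (y, t)) x)
    (w : E) :
    deriv (fun s => φ (x, s) ^ 2) t + ⟪w, gradient (fun y => φ (y, t) ^ 2) x⟫
      = 2 * φ (x, t) * (deriv (fun s => φ (x, s)) t + ⟪w, gradient (fun y => φ (y, t)) x⟫) := by
  rw [real_inner_comm _ w, real_inner_comm _ w, inner_gradient_left, inner_gradient_left]
  rw [deriv_fun_pow ht, fderiv_fun_pow 2 hx]
  simp only [Nat.cast_ofNat, Nat.add_one_sub_one, pow_one, nsmul_eq_mul, smul_apply, smul_eq_mul]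
  ring

theorem integral_mul_fderiv_eq_neg_fderiv_mul_of_hasCompactSupport {E : Type*}
    [NormedAddCommGroup E] [NormedSpace ℝ E] [FiniteDimensional ℝ E] [MeasurableSpace E]
    [BorelSpace E] {μ : Measure E} [μ.IsAddHaarMeasure] {f g : E → ℝ} (hf : ContDiff ℝ 1 f)
    (hg : ContDiff ℝ 1 g) (hg_supp : HasCompactSupport g) (w : E) :
    ∫ x, f x * fderiv ℝ g x w ∂μ = -∫ x, fderiv ℝ f x w * g x ∂μ := by
  have hf' : Continuous fun x => fderiv ℝ f x w :=
    (hf.continuous_fderiv one_ne_zero).clm_apply continuous_const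
  have hg' : Continuous fun x => fderiv ℝ g x w :=
    (hg.continuous_fderiv one_ne_zero).clm_apply continuous_const
  exact integral_mul_fderiv_eq_neg_fderiv_mul_of_integrable
    ((hf'.mul hg.continuous).integrable_of_hasCompactSupport hg_supp.mul_left)
    ((hf.continuous.mul hg').integrable_of_hasCompactSupport (hg_supp.fderiv_apply ℝ w).mul_left)
    ((hf.continuous.mul hg.continuous).integrable_of_hasCompactSupport hg_supp.mul_left)
    (fun x _ => hf.differentiable one_ne_zero x) (fun x _ => hg.differentiable one_ne_zero x)

theorem integral_inner_gradient_eq_neg_integral_spatialDiv_mul {m : ℕ}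
    {μ : Measure (EuclideanSpace ℝ (Fin m))} [μ.IsAddHaarMeasure]
    {v : EuclideanSpace ℝ (Fin m) × ℝ → EuclideanSpace ℝ (Fin m)} {t : ℝ}
    (hv : ContDiff ℝ 1 fun y => v (y, t)) {ψ : EuclideanSpace ℝ (Fin m) → ℝ}
    (hψ : ContDiff ℝ 1 ψ) (hψ_supp : HasCompactSupport ψ) :
    ∫ x, ⟪v (x, t), gradient ψ x⟫ ∂μ = -∫ x, spatialDiv v x t * ψ x ∂μ := by
  set e : Fin m → EuclideanSpace ℝ (Fin m) := fun i => EuclideanSpace.single i 1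
  have hvi : ∀ i, ContDiff ℝ 1 fun y => v (y, t) i := contDiff_euclidean.1 hv
  have hexpand : ∀ x, ⟪v (x, t), gradient ψ x⟫ = ∑ i, v (x, t) i * fderiv ℝ ψ x (e i) := by
    intro x
    rw [real_inner_comm, inner_gradient_left]
    conv_lhs => rw [← (EuclideanSpace.basisFun (Fin m) ℝ).sum_repr (v (x, t))]
    simp [e, map_sum]
  have hint : ∀ i, Integrable (fun x => v (x, t) i * fderiv ℝ ψ x (e i)) μ := fun i =>
    ((hvi i).continuous.mul ((hψ.continuous_fderiv one_ne_zero).clm_apply continuous_const))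
      |>.integrable_of_hasCompactSupport (hψ_supp.fderiv_apply ℝ _).mul_left
  have hint' : ∀ i, Integrable (fun x => fderiv ℝ (fun y => v (y, t) i) x (e i) * ψ x) μ :=
    fun i => ((((hvi i).continuous_fderiv one_ne_zero).clm_apply continuous_const).mul
      hψ.continuous).integrable_of_hasCompactSupport hψ_supp.mul_left
  simp only [hexpand, spatialDiv, Finset.sum_mul]
  rw [integral_finsetSum _ fun i _ => hint i, integral_finsetSum _ fun i _ => hint' i,
    ← Finset.sum_neg_distrib]
  exact Finset.sum_congr rfl fun i _ =>
    integral_mul_fderiv_eq_neg_fderiv_mul_of_hasCompactSupport (hvi i) hψ hψ_supp (e i)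

theorem transport_L2_energy_derivative {m : ℕ}
    (v : EuclideanSpace ℝ (Fin m) × ℝ → EuclideanSpace ℝ (Fin m))
    (φ : EuclideanSpace ℝ (Fin m) × ℝ → ℝ)
    (hv : ContDiff ℝ 1 v) (hφ : ContDiff ℝ 1 φ)
    (hpde : ∀ x t, deriv (fun s => φ (x, s)) t
      + ⟪v (x, t), gradient (fun y => φ (y, t)) x⟫ = 0)
    (K : Set (EuclideanSpace ℝ (Fin m))) (hK : IsCompact K)
    (hsupp : ∀ t, Function.support (fun x => φ (x, t)) ⊆ K)
    (t : ℝ) :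
    HasDerivAt (fun s => ∫ x, (φ (x, s)) ^ 2)
      (∫ x, spatialDiv v x t * (φ (x, t)) ^ 2) t := by
  have hslice : ContDiff ℝ 1 fun y => φ (y, t) := hφ.comp (contDiff_id.prodMk contDiff_const)
  have hsq_supp : ∀ s, support (fun x => φ (x, s) ^ 2) ⊆ K := fun s =>
    (support_pow _ two_ne_zero).trans_subset (hsupp s)
  have hsq_pde : ∀ x, deriv (fun s => φ (x, s) ^ 2) t
      = -⟪v (x, t), gradient (fun y => φ (y, t) ^ 2) x⟫ := fun x => by
    have htime : DifferentiableAt ℝ (fun s => φ (x, s)) t :=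
      (hφ.comp (contDiff_const.prodMk contDiff_id)).differentiable one_ne_zero t
    rw [eq_neg_iff_add_eq_zero, deriv_add_inner_gradient_sq htime
      (hslice.differentiable one_ne_zero x), hpde, mul_zero]
  have hv_slice : ContDiff ℝ 1 fun y => v (y, t) := hv.comp (contDiff_id.prodMk contDiff_const)
  convert hasDerivAt_integral_of_contDiff_of_support_subset (μ := volume) (hφ.pow 2) hK hsq_supp t using 1
  rw [integral_congr_ae (ae_of_all _ hsq_pde), integral_neg,
    integral_inner_gradient_eq_neg_integral_spatialDiv_mul hv_slice (hslice.pow 2)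
      (HasCompactSupport.intro hK fun x hx => ?_), neg_neg]
  simpa using notMem_support.1 fun h => hx (hsupp t h)
end

section
/- Let v : ℝ^m × ℝ → ℝ^m be continuously differentiable and let φ : ℝ^m × ℝ → ℝ be a continuously differentiable solution of the continuity equation ∂φ/∂t(x,t) + div_x(φ(x,t) v(x,t)) = 0 for all (x,t), supported for every t in a fixed compact set K ⊆ ℝ^m. Then t ↦ ∫_{ℝ^m} φ(x,t)² dx is differentiable with d/dt ∫_{ℝ^m} φ(x,t)² dx = − ∫_{ℝ^m} (div_x v)(x,t) φ(x,t)² dx. In particular, if (div_x v)(x,t) ≥ 0 everywhere, then t ↦ ∫_{ℝ^m} φ(x,t)² dx is nonincreasing. -/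
/-!
Differentiating under the integral sign is legitimate because `∂ₜ(φ²) = 2 φ ∂ₜφ` is
continuous and vanishes off the fixed compact set `K`, so it is dominated by a multiple of the
indicator of `K`. The equation turns `2 φ ∂ₜφ` into
`-2 φ div (φ v) = -div (φ² v) - (div v) φ²`, and the first term integrates to zero because
`φ² v` is `C¹` with compact support.
-/

open MeasureTheory RealInnerProductSpace

section ParametricIntegral

variable {X G : Type*} [TopologicalSpace X] [T2Space X] [MeasurableSpace X]
  [OpensMeasurableSpace X] {μ : Measure X} [IsFiniteMeasureOnCompacts μ] [NormedAddCommGroup G]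

theorem Continuous.integrable_slice_of_eq_zero_off {H : X × ℝ → G} (hH : Continuous H)
    {K : Set X} (hK : IsCompact K) (hsupp : ∀ x ∉ K, ∀ s, H (x, s) = 0) (s : ℝ) :
    Integrable (fun x => H (x, s)) μ :=
  (hH.comp (continuous_id.prodMk continuous_const)).integrable_of_hasCompactSupport <|
    HasCompactSupport.of_support_subset_isCompact hK fun x hx =>
      by_contra fun hxK => hx (hsupp x hxK s)

theorem hasDerivAt_integral_of_support_subset_isCompact [NormedSpace ℝ G] [CompleteSpace G]
    {F F' : X × ℝ → G} (hF : Continuous F) (hF' : Continuous F')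
    (hderiv : ∀ x t, HasDerivAt (fun s => F (x, s)) (F' (x, t)) t)
    {K : Set X} (hK : IsCompact K) (hsupp : ∀ t, Function.support (fun x => F (x, t)) ⊆ K)
    (t : ℝ) :
    HasDerivAt (fun s => ∫ x, F (x, s) ∂μ) (∫ x, F' (x, t) ∂μ) t := by
  have hF0 : ∀ x ∉ K, ∀ s, F (x, s) = 0 := fun x hx s =>
    by_contra fun h => hx (hsupp s h)
  -- off `K` the function `s ↦ F (x, s)` vanishes identically, hence so does its derivative
  have hF'0 : ∀ x ∉ K, ∀ s, F' (x, s) = 0 := fun x hx s =>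
    (hderiv x s).unique (by simpa [hF0 x hx] using hasDerivAt_const s (0 : G))
  obtain ⟨C, hC⟩ : ∃ C, ∀ p ∈ K ×ˢ Metric.closedBall t 1, ‖F' p‖ ≤ C :=
    (hK.prod (isCompact_closedBall t 1)).exists_bound_of_continuousOn hF'.continuousOn
  have h_bound :
      ∀ x, ∀ s ∈ Metric.ball t 1, ‖F' (x, s)‖ ≤ K.indicator (fun _ => C) x := by
    intro x s hs
    by_cases hx : x ∈ K
    · rw [Set.indicator_of_mem hx]
      exact hC (x, s) ⟨hx, Metric.ball_subset_closedBall hs⟩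
    · simp [hF'0 x hx, Set.indicator_of_notMem hx]
  exact (hasDerivAt_integral_of_dominated_loc_of_deriv_le (Metric.ball_mem_nhds t one_pos)
    (Filter.Eventually.of_forall fun s =>
      (hF.integrable_slice_of_eq_zero_off hK hF0 s).aestronglyMeasurable)
    (hF.integrable_slice_of_eq_zero_off hK hF0 t)
    (hF'.integrable_slice_of_eq_zero_off hK hF'0 t).aestronglyMeasurable
    (Filter.Eventually.of_forall h_bound)
    ((integrable_indicator_iff hK.measurableSet).2 (integrableOn_const hK.measure_lt_top.ne))
    (Filter.Eventually.of_forall fun x s _ => hderiv x s)).2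

end ParametricIntegral

section Divergence

variable {E : Type*} [NormedAddCommGroup E] [NormedSpace ℝ E]

theorem DifferentiableAt.hasDerivAt_prodMk_left {G : Type*} [NormedAddCommGroup G]
    [NormedSpace ℝ G] {F : E × ℝ → G} {x : E} {t : ℝ}
    (hF : DifferentiableAt ℝ F (x, t)) :
    HasDerivAt (fun s => F (x, s)) (fderiv ℝ F (x, t) (0, 1)) t :=
  hF.hasFDerivAt.comp_hasDerivAt t ((hasDerivAt_const t x).prodMk (hasDerivAt_id t))

theorem fderiv_sq_mul_apply {f g : E → ℝ} {x : E} (hf : DifferentiableAt ℝ f x)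
    (hg : DifferentiableAt ℝ g x) (w : E) :
    fderiv ℝ (fun y => f y ^ 2 * g y) x w
      = 2 * f x * fderiv ℝ (fun y => f y * g y) x w - f x ^ 2 * fderiv ℝ g x w := by
  have hsq : (fun y => f y ^ 2 * g y) = fun y => f y * (f y * g y) := by
    funext y; ring
  rw [hsq, fderiv_fun_mul hf (hf.fun_mul hg), fderiv_fun_mul hf hg]
  simp only [add_apply, smul_apply, smul_eq_mul]
  ring

variable [FiniteDimensional ℝ E] [MeasurableSpace E] [BorelSpace E] {μ : Measure E}
  [μ.IsAddHaarMeasure]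

theorem HasCompactSupport.integral_fderiv_apply_eq_zero {g : E → ℝ} (hg : ContDiff ℝ 1 g)
    (hcs : HasCompactSupport g) (w : E) :
    ∫ x, fderiv ℝ g x w ∂μ = 0 := by
  have h := integral_mul_fderiv_eq_neg_fderiv_mul_of_integrable (μ := μ)
    (f := fun _ => (1 : ℝ)) (g := g) (v := w) (by simp)
    (by simpa using ((hg.continuous_fderiv one_ne_zero).clm_apply
      continuous_const).integrable_of_hasCompactSupport (hcs.fderiv_apply ℝ w))
    (by simpa using hg.continuous.integrable_of_hasCompactSupport hcs)
    (fun x _ => differentiableAt_const _) (fun x _ => hg.differentiable one_ne_zero x)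
  simpa using h

theorem two_mul_integral_mul_sum_fderiv_mul {ι : Type*} [Fintype ι] {f : E → ℝ}
    {u : ι → E → ℝ} (hf : ContDiff ℝ 1 f) (hcs : HasCompactSupport f)
    (hu : ∀ i, ContDiff ℝ 1 (u i)) (e : ι → E) :
    2 * ∫ x, f x * ∑ i, fderiv ℝ (fun y => f y * u i y) x (e i) ∂μ
      = ∫ x, (∑ i, fderiv ℝ (u i) x (e i)) * f x ^ 2 ∂μ := by
  have hpoint : ∀ x, 2 * (f x * ∑ i, fderiv ℝ (fun y => f y * u i y) x (e i))
      = ∑ i, fderiv ℝ (fun y => f y ^ 2 * u i y) x (e i)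
        + (∑ i, fderiv ℝ (u i) x (e i)) * f x ^ 2 := by
    intro x
    rw [Finset.mul_sum, Finset.mul_sum, Finset.sum_mul, ← Finset.sum_add_distrib]
    refine Finset.sum_congr rfl fun i _ => ?_
    rw [fderiv_sq_mul_apply (hf.differentiable one_ne_zero x)
      ((hu i).differentiable one_ne_zero x)]
    ring
  have hcs_sq : HasCompactSupport fun y => f y ^ 2 := hcs.comp_left (zero_pow two_ne_zero)
  have hcs_i : ∀ i, HasCompactSupport fun y => f y ^ 2 * u i y := fun i => hcs_sq.mul_right
  have hint_i : ∀ i, Integrable (fun x => fderiv ℝ (fun y => f y ^ 2 * u i y) x (e i)) μ :=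
    fun i => (((hf.pow 2).mul (hu i)).continuous_fderiv one_ne_zero |>.clm_apply
      continuous_const).integrable_of_hasCompactSupport ((hcs_i i).fderiv_apply ℝ (e i))
  have hint_div : Integrable (fun x => (∑ i, fderiv ℝ (u i) x (e i)) * f x ^ 2) μ :=
    ((continuous_finsetSum _ fun i _ => ((hu i).continuous_fderiv one_ne_zero).clm_apply
      continuous_const).mul (hf.continuous.pow 2)).integrable_of_hasCompactSupport
      hcs_sq.mul_left
  rw [← integral_const_mul, integral_congr_ae (Filter.Eventually.of_forall hpoint),
    integral_add (integrable_finsetSum _ fun i _ => hint_i i) hint_div,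
    integral_finsetSum _ fun i _ => hint_i i, Finset.sum_eq_zero fun i _ =>
    (hcs_i i).integral_fderiv_apply_eq_zero ((hf.pow 2).mul (hu i)) (e i), zero_add]

end Divergence

theorem continuity_equation_L2_derivative {m : ℕ}
    (v : EuclideanSpace ℝ (Fin m) × ℝ → EuclideanSpace ℝ (Fin m))
    (φ : EuclideanSpace ℝ (Fin m) × ℝ → ℝ)
    (hv : ContDiff ℝ 1 v) (hφ : ContDiff ℝ 1 φ)
    (hpde : ∀ x t, deriv (fun s => φ (x, s)) t
      + ∑ i, fderiv ℝ (fun y => φ (y, t) * v (y, t) i) x (EuclideanSpace.single i 1) = 0)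
    (K : Set (EuclideanSpace ℝ (Fin m))) (hK : IsCompact K)
    (hsupp : ∀ t, Function.support (fun x => φ (x, t)) ⊆ K) :
    (∀ t, HasDerivAt (fun s => ∫ x, (φ (x, s)) ^ 2)
        (- ∫ x, spatialDiv v x t * (φ (x, t)) ^ 2) t) ∧
      ((∀ x t, 0 ≤ spatialDiv v x t) → Antitone (fun t => ∫ x, (φ (x, t)) ^ 2)) := by
  have hslice (t : ℝ) : ContDiff ℝ 1 fun y : EuclideanSpace ℝ (Fin m) => (y, t) :=
    contDiff_id.prodMk contDiff_const
  have hφt (x t) : HasDerivAt (fun s => φ (x, s)) (fderiv ℝ φ (x, t) (0, 1)) t :=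
    (hφ.differentiable one_ne_zero (x, t)).hasDerivAt_prodMk_left
  have hL2 (t : ℝ) : HasDerivAt (fun s => ∫ x, φ (x, s) ^ 2)
      (∫ x, 2 * φ (x, t) * fderiv ℝ φ (x, t) (0, 1)) t :=
    hasDerivAt_integral_of_support_subset_isCompact (F := fun p => φ p ^ 2)
      (hφ.continuous.pow 2) ((continuous_const.mul hφ.continuous).mul
        ((hφ.continuous_fderiv one_ne_zero).clm_apply continuous_const))
      (fun x t => by simpa using (hφt x t).fun_pow 2) hK
      (fun t x hx => hsupp t (ne_zero_pow two_ne_zero hx)) t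
  have hdiv (t : ℝ) : ∫ x, 2 * φ (x, t) * fderiv ℝ φ (x, t) (0, 1)
      = - ∫ x, spatialDiv v x t * φ (x, t) ^ 2 := by
    have hφt_eq (x) : fderiv ℝ φ (x, t) (0, 1)
        = - ∑ i, fderiv ℝ (fun y => φ (y, t) * v (y, t) i) x (EuclideanSpace.single i 1) := by
      rw [← (hφt x t).deriv]
      exact eq_neg_of_add_eq_zero_left (hpde x t)
    simp_rw [hφt_eq, mul_neg, integral_neg, mul_assoc, integral_const_mul]
    have hvt (i : Fin m) : ContDiff ℝ 1 fun y => v (y, t) i :=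
      ((EuclideanSpace.proj (𝕜 := ℝ) i).contDiff.comp hv).comp (hslice t)
    rw [two_mul_integral_mul_sum_fderiv_mul (f := fun y => φ (y, t))
      (u := fun i y => v (y, t) i) (hφ.comp (hslice t))
      (HasCompactSupport.of_support_subset_isCompact hK (hsupp t)) hvt]
    rfl
  have hderiv (t : ℝ) := hdiv t ▸ hL2 t
  refine ⟨hderiv, fun hdiv_nonneg => antitone_of_deriv_nonpos
    (fun t => (hderiv t).differentiableAt) fun t => ?_⟩
  rw [(hderiv t).deriv, neg_nonpos]
  exact integral_nonneg fun x => mul_nonneg (hdiv_nonneg x t) (sq_nonneg _)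
end

section
/- Let L > 0, β > 0, let a, v : [0,L] × ℝ → ℝ be continuously differentiable with v(0,t) ≥ 0 and v(L,t) ≥ 0 for all t ≥ 0 and −a(x,t) + ½ ∂v/∂x(x,t) ≤ −β for all (x,t) ∈ [0,L] × [0,∞). Let u : [0,L] × ℝ → ℝ be continuously differentiable, satisfy ∂u/∂t + a u + v ∂u/∂x = 0 on [0,L] × [0,∞), and satisfy the inflow boundary condition u(0,t) = 0 for all t ≥ 0. Then for all t ≥ 0, ∫₀^L u(x,t)² dx ≤ e^{−2βt} ∫₀^L u(x,0)² dx. -/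
/-! Energy method. Multiplying the equation by `2u` and using the rate condition gives, pointwise,
`∂ₜ(u²) ≤ -2β u² - ∂ₓ(v u²)`. Integrating over `[0, L]`, the flux term contributes
`v(L) u(L)² - v(0) u(0)² = v(L) u(L)² ≥ 0` (the inflow value vanishes, the outflow speed is
nonnegative), so `E(t) = ∫ u²` satisfies `E' ≤ -2β E`, and `e^{2βt} E(t)` is antitone. -/

open MeasureTheory Set intervalIntegral Function

section Slices

variable {𝕜 : Type*} [NontriviallyNormedField 𝕜]
  {E F G : Type*} [NormedAddCommGroup E] [NormedSpace 𝕜 E] [NormedAddCommGroup F]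
  [NormedSpace 𝕜 F] [NormedAddCommGroup G] [NormedSpace 𝕜 G] {n : WithTop ℕ∞} {f : E → F → G}
  {s : Set E} {T : Set F}

theorem ContDiffOn.uncurry_left (x : E) (hx : x ∈ s)
    (hf : ContDiffOn 𝕜 n (uncurry f) (s ×ˢ T)) :
    ContDiffOn 𝕜 n (f x) T :=
  hf.comp (contDiff_const.prodMk contDiff_id).contDiffOn fun _ hy => ⟨hx, hy⟩

theorem ContDiffOn.uncurry_right (y : F) (hy : y ∈ T)
    (hf : ContDiffOn 𝕜 n (uncurry f) (s ×ˢ T)) :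
    ContDiffOn 𝕜 n (fun x => f x y) s :=
  hf.comp (contDiff_id.prodMk contDiff_const).contDiffOn fun _ hx => ⟨hx, hy⟩

end Slices

section PartialDerivSnd

variable {E G : Type*} [NormedAddCommGroup E] [NormedSpace ℝ E] [NormedAddCommGroup G]
  [NormedSpace ℝ G] {f : E → ℝ → G} {s : Set E}

theorem deriv_uncurry_left_eq_fderivWithin {x : E} {t : ℝ} (hx : x ∈ s)
    (hf : DifferentiableWithinAt ℝ (uncurry f) (s ×ˢ univ) (x, t)) :
    deriv (f x) t = fderivWithin ℝ (uncurry f) (s ×ˢ univ) (x, t) (0, 1) := by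
  have hslice : HasDerivWithinAt (fun r => (x, r)) ((0 : E), (1 : ℝ)) univ t :=
    ((hasDerivAt_const t x).prodMk (hasDerivAt_id t)).hasDerivWithinAt
  have := hf.hasFDerivWithinAt.comp_hasDerivWithinAt t hslice fun r _ => ⟨hx, mem_univ r⟩
  exact (hasDerivWithinAt_univ.mp this).deriv

theorem ContDiffOn.continuousOn_deriv_uncurry_left
    (hf : ContDiffOn ℝ 1 (uncurry f) (s ×ˢ univ)) (hs : UniqueDiffOn ℝ s) :
    ContinuousOn (fun p : E × ℝ => deriv (f p.1) p.2) (s ×ˢ univ) := by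
  refine ((hf.continuousOn_fderivWithin (hs.prod uniqueDiffOn_univ) le_rfl).clm_apply
    (continuousOn_const (c := ((0 : E), (1 : ℝ))))).congr fun p hp => ?_
  exact deriv_uncurry_left_eq_fderivWithin hp.1 (hf.differentiableOn one_ne_zero p hp)

end PartialDerivSnd

theorem hasDerivAt_intervalIntegral_of_contDiffOn {G : Type*} [NormedAddCommGroup G]
    [NormedSpace ℝ G] {F : ℝ → ℝ → G} {a b : ℝ} (hab : a < b)
    (hF : ContDiffOn ℝ 1 (uncurry F) (Icc a b ×ˢ univ)) (t : ℝ) :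
    HasDerivAt (fun r => ∫ x in a..b, F x r) (∫ x in a..b, deriv (F x) t) t := by
  have hF' := hF.continuousOn_deriv_uncurry_left (uniqueDiffOn_Icc hab)
  obtain ⟨C, hC⟩ := (isCompact_Icc.prod (isCompact_Icc (a := t - 1) (b := t + 1))
    ).exists_bound_of_continuousOn (hF'.mono (prod_mono_right (subset_univ _)))
  have hIoc : uIoc a b ⊆ Icc a b := by
    rw [uIoc_of_le hab.le]; exact Ioc_subset_Icc_self
  have hmeas : ∀ {g : ℝ → G}, ContinuousOn g (Icc a b) →
      AEStronglyMeasurable g (volume.restrict (uIoc a b)) := fun hg =>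
    (hg.mono hIoc).aestronglyMeasurable measurableSet_uIoc
  refine (hasDerivAt_integral_of_dominated_loc_of_deriv_le (Metric.ball_mem_nhds t one_pos)
    (.of_forall fun r => hmeas (hF.continuousOn.uncurry_right r (mem_univ r)))
    ((hF.continuousOn.uncurry_right t (mem_univ t)).intervalIntegrable_of_Icc hab.le)
    (hmeas (hF'.uncurry_right (f := fun x r => deriv (F x) r) t (mem_univ t)))
    (.of_forall fun x hx r hr => hC (x, r) ⟨hIoc hx, ?_⟩) intervalIntegrable_const
    (.of_forall fun x hx r _ => ?_)).2
  · rw [Metric.mem_ball, Real.dist_eq, abs_sub_lt_iff] at hr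
    constructor <;> linarith
  · exact (((hF.uncurry_left x (hIoc hx)).differentiableOn one_ne_zero r
      (mem_univ r)).differentiableAt Filter.univ_mem).hasDerivAt

theorem le_exp_mul_of_hasDerivAt_of_le {f f' : ℝ → ℝ} {k : ℝ}
    (hf : ∀ t, HasDerivAt f (f' t) t) (hf' : ∀ t ≥ 0, f' t ≤ k * f t) {t : ℝ} (ht : 0 ≤ t) :
    f t ≤ Real.exp (k * t) * f 0 := by
  have hG : ∀ r, HasDerivAt (fun r => Real.exp (-k * r) * f r)
      (Real.exp (-k * r) * (f' r - k * f r)) r := fun r =>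
    (((hasDerivAt_id' r).const_mul (-k)).exp.fun_mul (hf r)).congr_deriv (by ring)
  have hanti : AntitoneOn (fun r => Real.exp (-k * r) * f r) (Ici 0) := by
    refine antitoneOn_of_deriv_nonpos (convex_Ici 0)
      (fun r _ => (hG r).continuousAt.continuousWithinAt)
      (fun r _ => (hG r).differentiableAt.differentiableWithinAt) fun r hr => ?_
    rw [interior_Ici] at hr
    rw [(hG r).deriv]
    exact mul_nonpos_of_nonneg_of_nonpos (Real.exp_nonneg _) (by linarith [hf' r hr.le])
  have := hanti self_mem_Ici ht ht
  simp only [mul_zero, Real.exp_zero, one_mul, neg_mul, Real.exp_neg] at this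
  rwa [inv_mul_le_iff₀ (Real.exp_pos _)] at this

theorem deriv_sq_le_of_transport {u v : ℝ → ℝ → ℝ} {s : Set ℝ} {x t a β : ℝ}
    (hut : DifferentiableAt ℝ (u x) t)
    (hux : DifferentiableWithinAt ℝ (fun y => u y t) s x)
    (hvx : DifferentiableWithinAt ℝ (fun y => v y t) s x)
    (hrate : -a + (1 / 2) * derivWithin (fun y => v y t) s x ≤ -β)
    (hpde : deriv (u x) t + a * u x t + v x t * derivWithin (fun y => u y t) s x = 0) :
    deriv (fun r => u x r ^ 2) t
      ≤ -2 * β * u x t ^ 2 - derivWithin (fun y => v y t * u y t ^ 2) s x := by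
  have hut' : deriv (u x) t = -a * u x t - v x t * derivWithin (fun y => u y t) s x := by
    linarith
  rw [deriv_fun_pow hut, derivWithin_fun_mul hvx (hux.fun_pow 2), derivWithin_fun_pow hux, hut']
  simp only [Nat.cast_ofNat, Nat.add_one_sub_one, pow_one]
  nlinarith [mul_le_mul_of_nonneg_right hrate (sq_nonneg (u x t))]

theorem integral_deriv_sq_le_of_transport {L β t : ℝ} (hL : 0 < L) {a v u : ℝ → ℝ → ℝ}
    (hv : ContDiffOn ℝ 1 (uncurry v) (Icc 0 L ×ˢ univ))
    (hu : ContDiffOn ℝ 1 (uncurry u) (Icc 0 L ×ˢ univ))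
    (hout : 0 ≤ v L t) (hbc : u 0 t = 0)
    (hrate : ∀ x ∈ Icc 0 L,
      -(a x t) + (1 / 2) * derivWithin (fun y => v y t) (Icc 0 L) x ≤ -β)
    (hpde : ∀ x ∈ Icc 0 L,
      deriv (u x) t + a x t * u x t + v x t * derivWithin (fun y => u y t) (Icc 0 L) x = 0) :
    ∫ x in 0..L, deriv (fun r => u x r ^ 2) t ≤ -2 * β * ∫ x in 0..L, u x t ^ 2 := by
  have hut := hu.uncurry_right t (mem_univ t)
  have hvt := hv.uncurry_right t (mem_univ t)
  have hflux : ContDiffOn ℝ 1 (fun y => v y t * u y t ^ 2) (Icc 0 L) := hvt.mul (hut.pow 2)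
  have hflux_int : 0 ≤ ∫ x in 0..L, derivWithin (fun y => v y t * u y t ^ 2) (Icc 0 L) x := by
    rw [integral_derivWithin_Icc_of_contDiffOn_Icc hflux hL.le, hbc]
    simpa using mul_nonneg hout (sq_nonneg (u L t))
  have hsq := (hu.pow 2).continuousOn_deriv_uncurry_left (f := fun x r => u x r ^ 2)
    (uniqueDiffOn_Icc hL)
  have hpointwise : ∀ x ∈ Icc 0 L, deriv (fun r => u x r ^ 2) t
      ≤ -2 * β * u x t ^ 2 - derivWithin (fun y => v y t * u y t ^ 2) (Icc 0 L) x := fun x hx =>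
    deriv_sq_le_of_transport
      (((hu.uncurry_left x hx).differentiableOn one_ne_zero t (mem_univ t)).differentiableAt
        Filter.univ_mem)
      (hut.differentiableOn one_ne_zero x hx) (hvt.differentiableOn one_ne_zero x hx)
      (hrate x hx) (hpde x hx)
  have hsq_int : IntervalIntegrable (fun x => u x t ^ 2) volume 0 L :=
    (hut.continuousOn.pow 2).intervalIntegrable_of_Icc hL.le
  have hflux_deriv_int : IntervalIntegrable
      (fun x => derivWithin (fun y => v y t * u y t ^ 2) (Icc 0 L) x) volume 0 L :=
    (hflux.continuousOn_derivWithin (uniqueDiffOn_Icc hL) le_rfl).intervalIntegrable_of_Icc hL.le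
  calc ∫ x in 0..L, deriv (fun r => u x r ^ 2) t
      ≤ ∫ x in 0..L, (-2 * β * u x t ^ 2
          - derivWithin (fun y => v y t * u y t ^ 2) (Icc 0 L) x) :=
        integral_mono_on hL.le
          ((hsq.uncurry_right (f := fun x r => deriv (fun r => u x r ^ 2) r) t
            (mem_univ t)).intervalIntegrable_of_Icc hL.le)
          ((hsq_int.const_mul _).sub hflux_deriv_int) hpointwise
    _ = -2 * β * (∫ x in 0..L, u x t ^ 2)
          - ∫ x in 0..L, derivWithin (fun y => v y t * u y t ^ 2) (Icc 0 L) x := by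
        rw [intervalIntegral.integral_sub (hsq_int.const_mul _) hflux_deriv_int,
          intervalIntegral.integral_const_mul]
    _ ≤ -2 * β * ∫ x in 0..L, u x t ^ 2 := sub_le_self _ hflux_int

theorem convection_contraction_1d_general (L β : ℝ) (hL : 0 < L)
    (a v u : ℝ → ℝ → ℝ)
    (hv : ContDiffOn ℝ 1 (fun p : ℝ × ℝ => v p.1 p.2) (Icc 0 L ×ˢ univ))
    (hu : ContDiffOn ℝ 1 (fun p : ℝ × ℝ => u p.1 p.2) (Icc 0 L ×ˢ univ))
    (hout : ∀ t ≥ (0 : ℝ), 0 ≤ v L t)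
    (hrate : ∀ x ∈ Icc 0 L, ∀ t ≥ (0 : ℝ),
      -(a x t) + (1 / 2) * derivWithin (fun y => v y t) (Icc 0 L) x ≤ -β)
    (hpde : ∀ x ∈ Icc 0 L, ∀ t ≥ (0 : ℝ),
      deriv (fun s => u x s) t + a x t * u x t
        + v x t * derivWithin (fun y => u y t) (Icc 0 L) x = 0)
    (hbc : ∀ t ≥ (0 : ℝ), u 0 t = 0) :
    ∀ t ≥ (0 : ℝ),
      (∫ x in (0 : ℝ)..L, (u x t) ^ 2)
        ≤ Real.exp (-2 * β * t) * ∫ x in (0 : ℝ)..L, (u x 0) ^ 2 := by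
  intro t ht
  refine le_exp_mul_of_hasDerivAt_of_le
    (hasDerivAt_intervalIntegral_of_contDiffOn (F := fun x r => u x r ^ 2) hL (hu.pow 2))
    (fun s hs => ?_) ht
  exact integral_deriv_sq_le_of_transport hL hv hu (hout s hs) (hbc s hs)
    (fun x hx => hrate x hx s hs) (fun x hx => hpde x hx s hs)

theorem convection_contraction_1d (L β : ℝ) (hL : 0 < L) (hβ : 0 < β)
    (a v u : ℝ → ℝ → ℝ)
    (ha : ContDiffOn ℝ 1 (fun p : ℝ × ℝ => a p.1 p.2) (Icc 0 L ×ˢ univ))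
    (hv : ContDiffOn ℝ 1 (fun p : ℝ × ℝ => v p.1 p.2) (Icc 0 L ×ˢ univ))
    (hu : ContDiffOn ℝ 1 (fun p : ℝ × ℝ => u p.1 p.2) (Icc 0 L ×ˢ univ))
    (hin : ∀ t ≥ (0 : ℝ), 0 ≤ v 0 t)
    (hout : ∀ t ≥ (0 : ℝ), 0 ≤ v L t)
    (hrate : ∀ x ∈ Icc 0 L, ∀ t ≥ (0 : ℝ),
      -(a x t) + (1 / 2) * derivWithin (fun y => v y t) (Icc 0 L) x ≤ -β)
    (hpde : ∀ x ∈ Icc 0 L, ∀ t ≥ (0 : ℝ),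
      deriv (fun s => u x s) t + a x t * u x t
        + v x t * derivWithin (fun y => u y t) (Icc 0 L) x = 0)
    (hbc : ∀ t ≥ (0 : ℝ), u 0 t = 0) :
    ∀ t ≥ (0 : ℝ),
      (∫ x in (0 : ℝ)..L, (u x t) ^ 2)
        ≤ Real.exp (-2 * β * t) * ∫ x in (0 : ℝ)..L, (u x 0) ^ 2 :=
  convection_contraction_1d_general L β hL a v u hv hu hout hrate hpde hbc
end

section
/- Let h : ℝ^m × ℝ^m × ℝ → ℝ, (p,x,t) ↦ h(p,x,t), be continuously differentiable, let φ : ℝ^m × ℝ → ℝ be twice continuously differentiable (jointly in (x,t)) and satisfy the Hamilton–Jacobi equation ∂φ/∂t(x,t) + h(∇φ(x,t), x, t) = 0 for all (x,t), and let x : ℝ → ℝ^m be differentiable and follow the flow velocity, i.e. x′(t) = ∇_p h(∇φ(x(t),t), x(t), t) for all t. Then the function t ↦ ∇φ(x(t), t) is differentiable with d/dt [∇φ(x(t),t)] = − ∇_x h(∇φ(x(t),t), x(t), t). -/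
open MeasureTheory RealInnerProductSpace

/-!
Write `u(y, s) = ∇φ(·, s)(y)` and `D²φ` for the (symmetric) second derivative of `φ`.
Differentiating the Hamilton–Jacobi equation in space in a direction `w` gives
`D²φ((w,0),(0,1)) + ⟨∇_p h, ∂_w u⟩ + ⟨∇_x h, w⟩ = 0`. Along the characteristic,
`⟨d/dt u(x(t),t), w⟩ = D²φ((x',1),(w,0)) = D²φ((w,0),(0,1)) + ⟨∂_w u, x'⟩`, and since
`x' = ∇_p h` the two `∇_p h` terms cancel, leaving `-⟨∇_x h, w⟩`.
-/

open ContinuousLinearMap InnerProductSpace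

section

variable {E F G : Type*} [NormedAddCommGroup F] [NormedSpace ℝ F]
  [NormedAddCommGroup G] [NormedSpace ℝ G]

lemma deriv_comp_prodMk_right {f : F × ℝ → G} {y : F} {t : ℝ}
    (hf : DifferentiableAt ℝ f (y, t)) :
    deriv (fun s => f (y, s)) t = fderiv ℝ f (y, t) (0, 1) := by
  change fderiv ℝ (f ∘ fun s => (y, s)) t 1 = _
  rw [(hf.hasFDerivAt.comp t (hasFDerivAt_prodMk_right y t)).fderiv]
  rfl

variable [NormedAddCommGroup E] [InnerProductSpace ℝ E] [CompleteSpace E]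

lemma inner_gradient_comp_left {H : G → ℝ} {c : E → G} {ι : E →L[ℝ] G} {a : E}
    (hH : DifferentiableAt ℝ H (c a)) (hc : HasFDerivAt c ι a) (w : E) :
    ⟪gradient (fun z => H (c z)) a, w⟫ = fderiv ℝ H (c a) (ι w) := by
  rw [inner_gradient_left]
  change fderiv ℝ (H ∘ c) a w = _
  rw [(hH.hasFDerivAt.comp a hc).fderiv]
  rfl

variable (E F) in
noncomputable def fstGradient : ((E × F) →L[ℝ] ℝ) →L[ℝ] E :=
  (toDual ℝ E).symm.toContinuousLinearEquiv.toContinuousLinearMap.comp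
    ((compL ℝ E (E × F) ℝ).flip (inl ℝ E F))

lemma inner_fstGradient_left (T : (E × F) →L[ℝ] ℝ) (w : E) :
    ⟪fstGradient E F T, w⟫ = T (w, 0) :=
  toDual_symm_apply

lemma gradient_eq_fstGradient_fderiv {f : E × F → ℝ} {y : E} {s : F}
    (hf : DifferentiableAt ℝ f (y, s)) :
    gradient (fun z => f (z, s)) y = fstGradient E F (fderiv ℝ f (y, s)) :=
  ext_inner_right ℝ fun w => by
    rw [inner_gradient_comp_left (c := fun z => (z, s)) hf (hasFDerivAt_prodMk_left y s),
      inner_fstGradient_left]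
    rfl

lemma hasDerivAt_gradient_along_curve {φ : E × ℝ → ℝ} {x : ℝ → E} {v : E} {t : ℝ}
    (hφ : Differentiable ℝ φ) (hφ' : DifferentiableAt ℝ (fderiv ℝ φ) (x t, t))
    (hx : HasDerivAt x v t) :
    HasDerivAt (fun s => gradient (fun z => φ (z, s)) (x s))
      (fstGradient E ℝ (fderiv ℝ (fderiv ℝ φ) (x t, t) (v, 1))) t := by
  have hgrad : (fun s => gradient (fun z => φ (z, s)) (x s))
      = fun s => fstGradient E ℝ (fderiv ℝ φ (x s, s)) :=
    funext fun s => gradient_eq_fstGradient_fderiv (hφ _)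
  have hDφ := hφ'.hasFDerivAt.comp_hasDerivAt (l := fderiv ℝ φ) (f := fun s => (x s, s)) t
    (hx.prodMk (hasDerivAt_id t))
  rw [hgrad]
  exact (fstGradient E ℝ).hasFDerivAt.comp_hasDerivAt t hDφ

lemma fderiv_fderiv_apply_add_fderiv_eq_zero_of_hamiltonJacobi {φ : E × ℝ → ℝ}
    {H : E × E × ℝ → ℝ} {y : E} {t : ℝ} (hφ : Differentiable ℝ φ)
    (hφ' : DifferentiableAt ℝ (fderiv ℝ φ) (y, t))
    (hH : DifferentiableAt ℝ H (gradient (fun z => φ (z, t)) y, y, t))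
    (hpde : ∀ z, fderiv ℝ φ (z, t) (0, 1) + H (gradient (fun z' => φ (z', t)) z, z, t) = 0)
    (w : E) :
    fderiv ℝ (fderiv ℝ φ) (y, t) (w, 0) (0, 1)
      + fderiv ℝ H (gradient (fun z => φ (z, t)) y, y, t)
        (fstGradient E ℝ (fderiv ℝ (fderiv ℝ φ) (y, t) (w, 0)), w, 0) = 0 := by
  have hDφ := hφ'.hasFDerivAt.comp (g := fderiv ℝ φ) y
    (hasFDerivAt_prodMk_left (𝕜 := ℝ) y t)
  have hDu := ((fstGradient E ℝ).hasFDerivAt.comp y hDφ).congr_of_eventuallyEq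
    (f₁ := fun z => gradient (fun z' => φ (z', t)) z)
    (Filter.Eventually.of_forall fun z => gradient_eq_fstGradient_fderiv (hφ _))
  have hlhs := ((apply ℝ ℝ ((0, 1) : E × ℝ)).hasFDerivAt.comp y hDφ).add
    (hH.hasFDerivAt.comp y (hDu.prodMk ((hasFDerivAt_id y).prodMk (hasFDerivAt_const t y))))
  have hzero := hlhs.unique
    ((hasFDerivAt_const (0 : ℝ) y).congr_of_eventuallyEq (Filter.Eventually.of_forall hpde))
  simpa using congrArg (fun L => L w) hzero

lemma fstGradient_apply_eq_neg_of_hamiltonJacobi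
    {D2 : (E × ℝ) →L[ℝ] (E × ℝ) →L[ℝ] ℝ} {DH : (E × E × ℝ) →L[ℝ] ℝ} {v gx : E}
    (hsymm : ∀ a b, D2 a b = D2 b a)
    (hlin : ∀ w, D2 (w, 0) (0, 1) + DH (fstGradient E ℝ (D2 (w, 0)), w, 0) = 0)
    (hv : ∀ w, ⟪v, w⟫ = DH (w, 0, 0)) (hgx : ∀ w, ⟪gx, w⟫ = DH (0, w, 0)) :
    fstGradient E ℝ (D2 (v, 1)) = -gx :=
  ext_inner_right ℝ fun w => by
    have hsplit : DH (fstGradient E ℝ (D2 (w, 0)), w, 0)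
        = DH (fstGradient E ℝ (D2 (w, 0)), 0, 0) + DH (0, w, 0) := by
      rw [← map_add]; simp
    calc ⟪fstGradient E ℝ (D2 (v, 1)), w⟫
        = D2 (w, 0) (0, 1) + D2 (w, 0) (v, 0) := by
          rw [inner_fstGradient_left, hsymm, ← map_add]; simp
      _ = D2 (w, 0) (0, 1) + DH (fstGradient E ℝ (D2 (w, 0)), 0, 0) := by
          rw [← hv, real_inner_comm, inner_fstGradient_left]
      _ = ⟪-gx, w⟫ := by rw [inner_neg_left, hgx]; linarith [hlin w]

end

theorem hamilton_jacobi_momentum_along_characteristics {m : ℕ}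
    (h : EuclideanSpace ℝ (Fin m) → EuclideanSpace ℝ (Fin m) → ℝ → ℝ)
    (φ : EuclideanSpace ℝ (Fin m) × ℝ → ℝ)
    (x : ℝ → EuclideanSpace ℝ (Fin m))
    (hh : ContDiff ℝ 1 (fun q : EuclideanSpace ℝ (Fin m) × EuclideanSpace ℝ (Fin m) × ℝ =>
      h q.1 q.2.1 q.2.2))
    (hφ : ContDiff ℝ 2 φ)
    (hpde : ∀ y t, deriv (fun s => φ (y, s)) t
      + h (gradient (fun z => φ (z, t)) y) y t = 0)
    (hflow : ∀ t, HasDerivAt x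
      (gradient (fun p => h p (x t) t) (gradient (fun z => φ (z, t)) (x t))) t) :
    ∀ t, HasDerivAt (fun s => gradient (fun z => φ (z, s)) (x s))
      (-(gradient (fun y => h (gradient (fun z => φ (z, t)) (x t)) y t) (x t))) t := by
  intro t
  set H := fun q : EuclideanSpace ℝ (Fin m) × EuclideanSpace ℝ (Fin m) × ℝ =>
    h q.1 q.2.1 q.2.2
  set p₀ := gradient (fun z => φ (z, t)) (x t)
  have hφd : Differentiable ℝ φ := hφ.differentiable two_ne_zero
  have hφ' : Differentiable ℝ (fderiv ℝ φ) :=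
    (hφ.fderiv_right le_rfl).differentiable one_ne_zero
  have hHd : Differentiable ℝ H := hh.differentiable one_ne_zero
  have hpde' :
      ∀ z, fderiv ℝ φ (z, t) (0, 1) + H (gradient (fun z' => φ (z', t)) z, z, t) = 0 :=
    fun z => deriv_comp_prodMk_right (hφd _) ▸ hpde z t
  have hv := inner_gradient_comp_left (hHd (p₀, x t, t))
    (c := fun p => (p, x t, t)) (hasFDerivAt_prodMk_left p₀ (x t, t))
  have hgx := inner_gradient_comp_left (hHd (p₀, x t, t)) (c := fun y => (p₀, y, t))
    ((hasFDerivAt_prodMk_right p₀ (x t, t)).comp (x t) (hasFDerivAt_prodMk_left (x t) t))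
  refine (hasDerivAt_gradient_along_curve hφd (hφ' _) (hflow t)).congr_deriv ?_
  exact fstGradient_apply_eq_neg_of_hamiltonJacobi (hφ.contDiffAt.isSymmSndFDerivAt (by simp))
    (fderiv_fderiv_apply_add_fderiv_eq_zero_of_hamiltonJacobi hφd (hφ' _) (hHd _) hpde') hv hgx
end

section
/- Let h : ℝ^m × ℝ^m × ℝ → ℝ, (p,x,t) ↦ h(p,x,t), be twice continuously differentiable, let φ : ℝ^m × ℝ → ℝ be three times continuously differentiable (jointly in (x,t)) and satisfy the Hamilton–Jacobi equation ∂φ/∂t(x,t) + h(∇φ(x,t), x, t) = 0 for all (x,t), and let x : ℝ → ℝ^m be differentiable with x′(t) = ∇_p h(∇φ(x(t),t), x(t), t). Define P(t) to be the m × m spatial Hessian matrix (∇∇φ)(x(t), t). Then P is differentiable and satisfies the matrix Riccati equation P′(t) = − h_{xx} − h_{xp} P(t) − P(t) h_{px} − P(t) h_{pp} P(t), where h_{xx}, h_{pp} are the matrices of second partial derivatives of h with respect to x and p respectively, h_{xp} is the matrix of mixed second partial derivatives (∂²h/∂x∂p), h_{px} = h_{xp}ᵀ, and all are evaluated at (∇φ(x(t),t),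 x(t), t). -/
/-!
Write `G = ∇ₓφ` and `P = ∇ₓ∇ₓφ`. Differentiating the Hamilton–Jacobi equation
`∂ₜφ + h(G, x, t) = 0` once in `xⱼ` and then in `xᵢ` gives, by the chain rule through the graph
`(x, t) ↦ (G(x, t), x, t)`, an identity expressing `∂ᵢ∂ⱼ∂ₜφ + Σₖ ∂_{pₖ}h ∂ᵢ∂ⱼ∂ₖφ` through the
second derivatives of `h` and `P`. By symmetry of the third derivatives of `φ`, the left-hand side is
the derivative of `Pᵢⱼ` in the direction `(∇ₚh, 1)`, which is the velocity of `s ↦ (x(s), s)`.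
-/

open MeasureTheory RealInnerProductSpace Matrix

noncomputable def hessMat {m : ℕ} (ψ : EuclideanSpace ℝ (Fin m) → ℝ)
    (x : EuclideanSpace ℝ (Fin m)) : Matrix (Fin m) (Fin m) ℝ :=
  fun i j => (fderiv ℝ (fun y => gradient ψ y) x (EuclideanSpace.single j 1)) i

section DirectionalDerivative

variable {X Y F : Type*} [NormedAddCommGroup X] [NormedSpace ℝ X] [NormedAddCommGroup Y]
  [NormedSpace ℝ Y] [NormedAddCommGroup F] [NormedSpace ℝ F]

noncomputable def dirDeriv (f : X → F) (v : X) : X → F := fun q => fderiv ℝ f q v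

theorem contDiff_dirDeriv {k n : WithTop ℕ∞} {f : X → F} (hf : ContDiff ℝ k f) (hn : n + 1 ≤ k)
    (v : X) : ContDiff ℝ n (dirDeriv f v) :=
  (hf.fderiv_right hn).clm_apply contDiff_const

theorem differentiable_dirDeriv {k : WithTop ℕ∞} {f : X → F} (hf : ContDiff ℝ k f) (hk : 2 ≤ k)
    (v : X) : Differentiable ℝ (dirDeriv f v) :=
  (contDiff_dirDeriv hf (n := 1) hk v).differentiable one_ne_zero

theorem dirDeriv_comp_of_hasFDerivAt {f : Y → F} {g : X → Y} {L : X →L[ℝ] Y} {q : X}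
    (hf : DifferentiableAt ℝ f (g q)) (hg : HasFDerivAt g L q) (v : X) :
    dirDeriv (fun z => f (g z)) v q = dirDeriv f (L v) (g q) := by
  change fderiv ℝ (f ∘ g) q v = _
  rw [(hf.hasFDerivAt.comp q hg).fderiv]
  rfl

theorem DifferentiableAt.hasDerivAt_comp_prodMk {f : X × ℝ → F} {x : ℝ → X} {x' : X} {t : ℝ}
    (hf : DifferentiableAt ℝ f (x t, t)) (hx : HasDerivAt x x' t) :
    HasDerivAt (fun s => f (x s, s)) (dirDeriv f (x', 1) (x t, t)) t :=
  hf.hasFDerivAt.comp_hasDerivAt (f := fun s => (x s, s)) t (hx.prodMk (hasDerivAt_id t))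

theorem dirDeriv_dirDeriv_comm {f : X → F} {q : X} (hf : ContDiffAt ℝ 2 f q) (v w : X) :
    dirDeriv (dirDeriv f v) w q = dirDeriv (dirDeriv f w) v q := by
  have hd : DifferentiableAt ℝ (fderiv ℝ f) q :=
    (hf.fderiv_right (m := 1) le_rfl).differentiableAt one_ne_zero
  have hsnd : ∀ v w, dirDeriv (dirDeriv f v) w q = fderiv ℝ (fderiv ℝ f) q w v := fun v w => by
    change fderiv ℝ (ContinuousLinearMap.apply ℝ F v ∘ fderiv ℝ f) q w = _
    rw [((ContinuousLinearMap.apply ℝ F v).hasFDerivAt.comp q hd.hasFDerivAt).fderiv]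
    rfl
  rw [hsnd, hsnd, (hf.isSymmSndFDerivAt (by simp)).eq]

theorem dirDeriv_dirDeriv_dirDeriv_comm {f : X → F} (hf : ContDiff ℝ 3 f) (u v w q : X) :
    dirDeriv (dirDeriv (dirDeriv f u) v) w q = dirDeriv (dirDeriv (dirDeriv f w) v) u q := by
  have hcomm : ∀ a b, dirDeriv (dirDeriv f a) b = dirDeriv (dirDeriv f b) a := fun a b =>
    funext fun q => dirDeriv_dirDeriv_comm (hf.contDiffAt.of_le (by norm_num)) a b
  rw [hcomm u v, dirDeriv_dirDeriv_comm ((contDiff_dirDeriv hf (by norm_num) v).contDiffAt) u w,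
    hcomm v w]

theorem dirDeriv_fun_add {f g : X → F} {q v : X} (hf : DifferentiableAt ℝ f q)
    (hg : DifferentiableAt ℝ g q) :
    dirDeriv (fun x => f x + g x) v q = dirDeriv f v q + dirDeriv g v q := by
  simp [dirDeriv, fderiv_fun_add hf hg]

theorem dirDeriv_fun_sum {ι : Type*} {s : Finset ι} {f : ι → X → F} {q v : X}
    (hf : ∀ i ∈ s, DifferentiableAt ℝ (f i) q) :
    dirDeriv (fun x => ∑ i ∈ s, f i x) v q = ∑ i ∈ s, dirDeriv (f i) v q := by
  simp [dirDeriv, fderiv_fun_sum hf]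

theorem dirDeriv_fun_mul {f g : X → ℝ} {q v : X} (hf : DifferentiableAt ℝ f q)
    (hg : DifferentiableAt ℝ g q) :
    dirDeriv (fun x => f x * g x) v q = dirDeriv f v q * g q + f q * dirDeriv g v q := by
  simp only [dirDeriv, fderiv_fun_mul hf hg, _root_.add_apply,
    _root_.smul_apply, smul_eq_mul]
  ring

noncomputable def hessianBlock {ι : Type*} (f : X → ℝ) (u v : ι → X) (q : X) : Matrix ι ι ℝ :=
  Matrix.of fun i j => dirDeriv (dirDeriv f (u i)) (v j) q

theorem hessianBlock_transpose {ι : Type*} {f : X → ℝ} {q : X} (hf : ContDiffAt ℝ 2 f q)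
    (u v : ι → X) : (hessianBlock f u v q)ᵀ = hessianBlock f v u q := by
  ext i j
  exact dirDeriv_dirDeriv_comm hf _ _

end DirectionalDerivative

section Euclidean

variable {ι X Y F : Type*} [Fintype ι] [NormedAddCommGroup X] [NormedSpace ℝ X]
  [NormedAddCommGroup Y] [NormedSpace ℝ Y] [NormedAddCommGroup F] [NormedSpace ℝ F]

theorem fderiv_euclidean_apply {G : X → EuclideanSpace ℝ ι} {q : X} (hG : DifferentiableAt ℝ G q)
    (w : X) (k : ι) : fderiv ℝ G q w k = fderiv ℝ (fun q => G q k) q w := by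
  change _ = fderiv ℝ ((fun f : EuclideanSpace ℝ ι => f k) ∘ G) q w
  rw [((PiLp.hasFDerivAt_apply 2 (G q) k).comp q hG.hasFDerivAt).fderiv]
  rfl

variable [DecidableEq ι]

theorem gradient_apply_eq_fderiv_single (f : EuclideanSpace ℝ ι → ℝ) (y : EuclideanSpace ℝ ι)
    (k : ι) : gradient f y k = fderiv ℝ f y (EuclideanSpace.single k 1) := by
  have h := inner_gradient_left (𝕜 := ℝ) (f := f) (x := y) (y := EuclideanSpace.single k 1)
  rw [EuclideanSpace.inner_single_right] at h
  simpa using h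

theorem map_prod_eq_sum_single (L : EuclideanSpace ℝ ι × Y →L[ℝ] F) (a : EuclideanSpace ℝ ι)
    (y : Y) : L (a, y) = ∑ k, a k • L (EuclideanSpace.single k 1, 0) + L (0, y) := by
  have hsplit : L (a, y) = (L ∘L ContinuousLinearMap.inl ℝ _ Y) a + L (0, y) := by
    rw [ContinuousLinearMap.comp_apply, ContinuousLinearMap.inl_apply, ← map_add, Prod.mk_add_mk,
      add_zero, zero_add]
  conv_lhs => rw [hsplit, ← (EuclideanSpace.basisFun ι ℝ).sum_repr a]
  simp

theorem gradient_comp_apply {f : Y → ℝ} {g : EuclideanSpace ℝ ι → Y}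
    {L : EuclideanSpace ℝ ι →L[ℝ] Y} {y : EuclideanSpace ℝ ι} (hf : DifferentiableAt ℝ f (g y))
    (hg : HasFDerivAt g L y) (k : ι) :
    gradient (fun z => f (g z)) y k = dirDeriv f (L (EuclideanSpace.single k 1)) (g y) := by
  rw [gradient_apply_eq_fderiv_single]
  exact dirDeriv_comp_of_hasFDerivAt hf hg _

theorem fderiv_gradient_comp_apply {f : Y → ℝ} (hf : ContDiff ℝ 2 f)
    {g : X → EuclideanSpace ℝ ι → Y} {y : X → EuclideanSpace ℝ ι}
    {B : EuclideanSpace ℝ ι →L[ℝ] Y} {C : X →L[ℝ] Y} {u : X}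
    (hg : ∀ u z, HasFDerivAt (g u) B z) (hgy : ∀ u, HasFDerivAt (fun u => g u (y u)) C u)
    (v : X) (k : ι) :
    fderiv ℝ (fun u => gradient (fun z => f (g u z)) (y u)) u v k
      = dirDeriv (dirDeriv f (B (EuclideanSpace.single k 1))) (C v) (g u (y u)) := by
  have hcoord : ∀ k, (fun u => gradient (fun z => f (g u z)) (y u) k)
      = fun u => dirDeriv f (B (EuclideanSpace.single k 1)) (g u (y u)) := fun k =>
    funext fun u => gradient_comp_apply (hf.differentiable (by norm_num) _) (hg u _) k
  have hdiff : DifferentiableAt ℝ (fun u => gradient (fun z => f (g u z)) (y u)) u :=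
    differentiableAt_euclidean.2 fun k => by
      rw [hcoord k]
      exact (differentiable_dirDeriv hf le_rfl _ _).comp u (hgy u).differentiableAt
  rw [fderiv_euclidean_apply hdiff, hcoord k]
  exact dirDeriv_comp_of_hasFDerivAt (differentiable_dirDeriv hf le_rfl _ _) (hgy u) v

end Euclidean

theorem hessMat_comp_eq_hessianBlock {m : ℕ} {Y : Type*} [NormedAddCommGroup Y] [NormedSpace ℝ Y]
    {f : Y → ℝ} (hf : ContDiff ℝ 2 f) {g : EuclideanSpace ℝ (Fin m) → Y}
    {B : EuclideanSpace ℝ (Fin m) →L[ℝ] Y} (hg : ∀ z, HasFDerivAt g B z)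
    (y : EuclideanSpace ℝ (Fin m)) :
    hessMat (fun z => f (g z)) y = hessianBlock f (fun k => B (EuclideanSpace.single k 1))
      (fun k => B (EuclideanSpace.single k 1)) (g y) := by
  ext i j
  exact fderiv_gradient_comp_apply hf (g := fun _ => g) (y := id) (fun _ => hg) hg _ i

section HamiltonJacobi

variable {ι : Type*} [Fintype ι] [DecidableEq ι]

noncomputable def spaceDir (k : ι) : EuclideanSpace ℝ ι × ℝ := (EuclideanSpace.single k 1, 0)

-- A Hamiltonian is a function of `(p, x, t)`, momentum first.
noncomputable def momentumDir (k : ι) : EuclideanSpace ℝ ι × EuclideanSpace ℝ ι × ℝ :=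
  (EuclideanSpace.single k 1, 0)

noncomputable def positionDir (k : ι) : EuclideanSpace ℝ ι × EuclideanSpace ℝ ι × ℝ :=
  (0, spaceDir k)

noncomputable def spatialGradient (φ : EuclideanSpace ℝ ι × ℝ → ℝ) (q : EuclideanSpace ℝ ι × ℝ) :
    EuclideanSpace ℝ ι :=
  gradient (fun z => φ (z, q.2)) q.1

noncomputable def spatialHessian (φ : EuclideanSpace ℝ ι × ℝ → ℝ) (q : EuclideanSpace ℝ ι × ℝ) :
    Matrix ι ι ℝ :=
  hessianBlock φ spaceDir spaceDir q

variable {φ : EuclideanSpace ℝ ι × ℝ → ℝ} {H : EuclideanSpace ℝ ι × EuclideanSpace ℝ ι × ℝ → ℝ}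

theorem spatialGradient_apply (hφ : Differentiable ℝ φ) (q : EuclideanSpace ℝ ι × ℝ) (k : ι) :
    spatialGradient φ q k = dirDeriv φ (spaceDir k) q :=
  gradient_comp_apply (hφ _) (hasFDerivAt_prodMk_left q.1 q.2) k

theorem contDiff_spatialGradient {k n : WithTop ℕ∞} (hφ : ContDiff ℝ k φ) (hn : n + 1 ≤ k) :
    ContDiff ℝ n (spatialGradient φ) := by
  have hφ' : Differentiable ℝ φ := (hφ.of_le (le_trans le_add_self hn)).differentiable one_ne_zero
  refine contDiff_euclidean.2 fun k => ?_
  simp_rw [spatialGradient_apply hφ']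
  exact contDiff_dirDeriv hφ hn _

theorem fderiv_spatialGradient_apply (hφ : ContDiff ℝ 2 φ) (q w : EuclideanSpace ℝ ι × ℝ)
    (k : ι) : fderiv ℝ (spatialGradient φ) q w k = dirDeriv (dirDeriv φ (spaceDir k)) w q := by
  rw [fderiv_euclidean_apply ((contDiff_spatialGradient hφ (n := 1) le_rfl).differentiable
    one_ne_zero q)]
  simp_rw [spatialGradient_apply (hφ.differentiable (by norm_num))]
  rfl

theorem differentiable_comp_graph_spatialGradient (hφ : ContDiff ℝ 2 φ)
    {F : EuclideanSpace ℝ ι × EuclideanSpace ℝ ι × ℝ → ℝ} (hF : Differentiable ℝ F) :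
    Differentiable ℝ (fun q => F (spatialGradient φ q, q)) :=
  hF.comp (((contDiff_spatialGradient hφ (n := 1) le_rfl).differentiable one_ne_zero).prodMk
    differentiable_id)

theorem dirDeriv_comp_graph_spatialGradient (hφ : ContDiff ℝ 2 φ)
    {F : EuclideanSpace ℝ ι × EuclideanSpace ℝ ι × ℝ → ℝ} {q : EuclideanSpace ℝ ι × ℝ}
    (hF : DifferentiableAt ℝ F (spatialGradient φ q, q)) (w : EuclideanSpace ℝ ι × ℝ) :
    dirDeriv (fun q => F (spatialGradient φ q, q)) w q
      = ∑ k, dirDeriv (dirDeriv φ (spaceDir k)) w q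
          * dirDeriv F (momentumDir k) (spatialGradient φ q, q)
        + dirDeriv F (0, w) (spatialGradient φ q, q) := by
  have hG := (contDiff_spatialGradient hφ (n := 1) le_rfl).differentiable one_ne_zero q
  rw [dirDeriv_comp_of_hasFDerivAt (g := fun q => (spatialGradient φ q, q)) hF
      (hG.hasFDerivAt.prodMk (hasFDerivAt_id q)),
    dirDeriv, ContinuousLinearMap.prod_apply, map_prod_eq_sum_single]
  simp [fderiv_spatialGradient_apply hφ, dirDeriv, momentumDir]

theorem hamiltonJacobi_first_spatial_derivative (hφ : ContDiff ℝ 2 φ) (hH : Differentiable ℝ H)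
    (hHJ : ∀ q, dirDeriv φ (0, 1) q + H (spatialGradient φ q, q) = 0) (j : ι)
    (q : EuclideanSpace ℝ ι × ℝ) :
    dirDeriv (dirDeriv φ (0, 1)) (spaceDir j) q
      + ∑ k, dirDeriv (dirDeriv φ (spaceDir k)) (spaceDir j) q
          * dirDeriv H (momentumDir k) (spatialGradient φ q, q)
      + dirDeriv H (positionDir j) (spatialGradient φ q, q) = 0 := by
  have hconst : dirDeriv (fun q => dirDeriv φ (0, 1) q + H (spatialGradient φ q, q))
      (spaceDir j) q = 0 := by
    rw [funext hHJ]
    simp [dirDeriv]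
  rw [dirDeriv_fun_add (differentiable_dirDeriv hφ le_rfl _ q)
      (differentiable_comp_graph_spatialGradient hφ hH q),
    dirDeriv_comp_graph_spatialGradient hφ (hH _)] at hconst
  rw [← hconst, add_assoc]
  rfl

-- Stated with the transposes the chain rule produces; symmetry of second derivatives removes them.
theorem hamiltonJacobi_second_spatial_derivative (hφ : ContDiff ℝ 3 φ) (hH : ContDiff ℝ 2 H)
    (hHJ : ∀ q, dirDeriv φ (0, 1) q + H (spatialGradient φ q, q) = 0) (q : EuclideanSpace ℝ ι × ℝ)
    (i j : ι) :
    dirDeriv (dirDeriv (dirDeriv φ (0, 1)) (spaceDir j)) (spaceDir i) q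
      + ∑ k, dirDeriv H (momentumDir k) (spatialGradient φ q, q)
          * dirDeriv (dirDeriv (dirDeriv φ (spaceDir k)) (spaceDir j)) (spaceDir i) q
      + ((hessianBlock H positionDir positionDir (spatialGradient φ q, q))ᵀ
        + (hessianBlock H momentumDir positionDir (spatialGradient φ q, q))ᵀ * spatialHessian φ q
        + (spatialHessian φ q)ᵀ * (hessianBlock H positionDir momentumDir (spatialGradient φ q, q))ᵀ
        + (spatialHessian φ q)ᵀ * (hessianBlock H momentumDir momentumDir (spatialGradient φ q, q))ᵀ
          * spatialHessian φ q) i j = 0 := by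
  have hφ2 : ContDiff ℝ 2 φ := hφ.of_le (by norm_num)
  have hφ' : ∀ v w, Differentiable ℝ (dirDeriv (dirDeriv φ v) w) := fun v w =>
    differentiable_dirDeriv (contDiff_dirDeriv hφ (n := 2) (by norm_num) v) le_rfl w
  have hgraph : ∀ v, Differentiable ℝ (fun q => dirDeriv H v (spatialGradient φ q, q)) := fun v =>
    differentiable_comp_graph_spatialGradient hφ2 (differentiable_dirDeriv hH le_rfl v)
  have hterm : ∀ k, DifferentiableAt ℝ (fun q => dirDeriv (dirDeriv φ (spaceDir k)) (spaceDir j) q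
      * dirDeriv H (momentumDir k) (spatialGradient φ q, q)) q := fun k =>
    (hφ' _ _ q).fun_mul (hgraph _ q)
  have hsum := DifferentiableAt.fun_sum (u := Finset.univ) fun k _ => hterm k
  have hzero := congrArg (fun f => dirDeriv f (spaceDir i) q)
    (funext (hamiltonJacobi_first_spatial_derivative hφ2 (hH.differentiable (by norm_num)) hHJ j))
  replace hzero : _ = (0 : ℝ) := hzero.trans (by simp [dirDeriv])
  rw [dirDeriv_fun_add ((hφ' _ _ q).fun_add hsum) (hgraph _ q),
    dirDeriv_fun_add (hφ' _ _ q) hsum, dirDeriv_fun_sum fun k _ => hterm k] at hzero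
  simp only [dirDeriv_fun_mul (hφ' _ _ q) (hgraph _ q), mul_add, Finset.sum_add_distrib,
    dirDeriv_comp_graph_spatialGradient hφ2 (differentiable_dirDeriv hH le_rfl _ _)] at hzero
  rw [← hzero]
  simp only [Matrix.add_apply, Matrix.mul_apply, Matrix.transpose_apply, spatialHessian,
    hessianBlock, Matrix.of_apply, positionDir, mul_comm]
  ring

theorem spatialHessian_riccati_along_characteristic (hφ : ContDiff ℝ 3 φ) (hH : ContDiff ℝ 2 H)
    (hHJ : ∀ q, dirDeriv φ (0, 1) q + H (spatialGradient φ q, q) = 0) (q : EuclideanSpace ℝ ι × ℝ)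
    (i j : ι) :
    dirDeriv (fun q => spatialHessian φ q i j)
        (gradient (fun p => H (p, q)) (spatialGradient φ q), 1) q
      = (- hessianBlock H positionDir positionDir (spatialGradient φ q, q)
        - hessianBlock H positionDir momentumDir (spatialGradient φ q, q) * spatialHessian φ q
        - spatialHessian φ q * (hessianBlock H positionDir momentumDir (spatialGradient φ q, q))ᵀ
        - spatialHessian φ q * hessianBlock H momentumDir momentumDir (spatialGradient φ q, q)
          * spatialHessian φ q) i j := by
  have hvel : ∀ k, gradient (fun p => H (p, q)) (spatialGradient φ q) k
      = dirDeriv H (momentumDir k) (spatialGradient φ q, q) := fun k =>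
    gradient_comp_apply (hH.differentiable (by norm_num) _) (hasFDerivAt_prodMk_left _ q) k
  change dirDeriv (dirDeriv (dirDeriv φ (spaceDir i)) (spaceDir j)) _ q = _
  rw [dirDeriv, map_prod_eq_sum_single]
  simp only [hvel, smul_eq_mul]
  change ∑ k, _ * dirDeriv _ (spaceDir k) q + dirDeriv _ (0, 1) q = _
  simp only [dirDeriv_dirDeriv_dirDeriv_comm hφ (spaceDir i) (spaceDir j)]
  have hsecond := hamiltonJacobi_second_spatial_derivative hφ hH hHJ q i j
  have hφ2 : ContDiffAt ℝ 2 φ q := hφ.contDiffAt.of_le (by norm_num)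
  simp only [spatialHessian, hessianBlock_transpose hφ2, hessianBlock_transpose hH.contDiffAt,
    Matrix.sub_apply, Matrix.neg_apply, Matrix.add_apply] at hsecond ⊢
  linarith

end HamiltonJacobi

theorem hamilton_jacobi_hessian_riccati {m : ℕ}
    (h : EuclideanSpace ℝ (Fin m) → EuclideanSpace ℝ (Fin m) → ℝ → ℝ)
    (φ : EuclideanSpace ℝ (Fin m) × ℝ → ℝ)
    (x : ℝ → EuclideanSpace ℝ (Fin m))
    (hh : ContDiff ℝ 2 (fun q : EuclideanSpace ℝ (Fin m) × EuclideanSpace ℝ (Fin m) × ℝ =>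
      h q.1 q.2.1 q.2.2))
    (hφ : ContDiff ℝ 3 φ)
    (hpde : ∀ y t, deriv (fun s => φ (y, s)) t
      + h (gradient (fun z => φ (z, t)) y) y t = 0)
    (hflow : ∀ t, HasDerivAt x
      (gradient (fun p => h p (x t) t) (gradient (fun z => φ (z, t)) (x t))) t)
    -- the momentum `∇φ` along the trajectory
    (pt : ℝ → EuclideanSpace ℝ (Fin m))
    (hpt : ∀ t, pt t = gradient (fun z => φ (z, t)) (x t))
    -- the Hessian `P(t) = ∇∇φ(x(t), t)` along the trajectory
    (P : ℝ → Matrix (Fin m) (Fin m) ℝ)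
    (hP : ∀ t, P t = hessMat (fun y => φ (y, t)) (x t))
    -- the second derivatives of the Hamiltonian along the trajectory
    (Hxx Hxp Hpp : ℝ → Matrix (Fin m) (Fin m) ℝ)
    (hHxx : ∀ t, Hxx t = hessMat (fun y => h (pt t) y t) (x t))
    (hHpp : ∀ t, Hpp t = hessMat (fun p => h p (x t) t) (pt t))
    (hHxp : ∀ t i j, Hxp t i j =
      (fderiv ℝ (fun p => gradient (fun y => h p y t) (x t)) (pt t)
        (EuclideanSpace.single j 1)) i) :
    ∀ t i j, HasDerivAt (fun s => P s i j)
      ((- Hxx t - Hxp t * P t - P t * (Hxp t)ᵀ - P t * Hpp t * P t) i j) t := by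
  intro t i j
  have hφ2 : ContDiff ℝ 2 φ := hφ.of_le (by norm_num)
  have hHJ : ∀ q, dirDeriv φ (0, 1) q + h (spatialGradient φ q) q.1 q.2 = 0 := fun q => by
    convert hpde q.1 q.2 using 2
    · exact (dirDeriv_comp_of_hasFDerivAt (hφ2.differentiable (by norm_num) q)
        (hasFDerivAt_prodMk_right q.1 q.2) 1).symm
    · rfl
  have hPs : ∀ s, P s = spatialHessian φ (x s, s) := fun s =>
    (hP s).trans (hessMat_comp_eq_hessianBlock hφ2 (fun z => hasFDerivAt_prodMk_left z s) _)
  have hposition : ∀ p z : EuclideanSpace ℝ (Fin m), HasFDerivAt (fun y => (p, y, t))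
      ((0 : EuclideanSpace ℝ (Fin m) →L[ℝ] EuclideanSpace ℝ (Fin m)).prod (.inl ℝ _ ℝ)) z :=
    fun p z => (hasFDerivAt_const p z).prodMk (hasFDerivAt_prodMk_left z t)
  have hHxx' := (hHxx t).trans (hessMat_comp_eq_hessianBlock hh (hposition (pt t)) _)
  have hHpp' := (hHpp t).trans
    (hessMat_comp_eq_hessianBlock hh (fun p => hasFDerivAt_prodMk_left p (x t, t)) _)
  have hHxp' : Hxp t = hessianBlock _ positionDir momentumDir (pt t, x t, t) := Matrix.ext
    fun i j => (hHxp t i j).trans (fderiv_gradient_comp_apply hh (y := fun _ => x t) hposition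
      (fun p => hasFDerivAt_prodMk_left p (x t, t)) _ i)
  rw [funext fun s => congrFun (congrFun (hPs s) i) j, hHxx', hHpp', hHxp', hPs, hpt t]
  exact spatialHessian_riccati_along_characteristic hφ hh hHJ (x t, t) i j ▸
    DifferentiableAt.hasDerivAt_comp_prodMk (f := fun q => spatialHessian φ q i j)
      (differentiable_dirDeriv (contDiff_dirDeriv hφ (n := 2) (by norm_num) _) le_rfl _ _)
      (hflow t)
end

section
/- Let A, B, C, M : ℝ → Matrix (Fin m) (Fin m) ℝ be such that M, and the curve x : ℝ → ℝ^m, are differentiable, A(t), C(t), M(t) are symmetric for every t, M′(t) = − A(t) − B(t) M(t) − M(t) B(t)ᵀ − M(t) C(t) M(t), and x′(t) = (C(t) M(t) + B(t)ᵀ) x(t) for all t. Then t ↦ x(t)ᵀ M(t) x(t) is differentiable with d/dt [x(t)ᵀ M(t) x(t)] = − x(t)ᵀ ( A(t) − M(t) C(t) M(t) ) x(t). -/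
/-!
Differentiate the quadratic form by the product rule: with `Q = C M + Bᵀ`, the derivative is
`(Q x) ⬝ M x + x ⬝ (M' x + M Q x)`. Symmetry of `M` turns the first term into `x ⬝ M Q x`, so the
derivative is the quadratic form of `M' + 2 M Q = -A + M C M + (M Bᵀ - B M)`, and the last bracket,
being `N - Nᵀ` for `N = M Bᵀ`, has vanishing quadratic form.
-/

open Matrix

section Calculus

variable {𝕜 : Type*} [NontriviallyNormedField 𝕜] {m n : Type*} [Fintype n] {t : 𝕜}

theorem hasDerivAt_dotProduct {u v : 𝕜 → n → 𝕜} {u' v' : n → 𝕜}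
    (hu : ∀ i, HasDerivAt (fun s => u s i) (u' i) t)
    (hv : ∀ i, HasDerivAt (fun s => v s i) (v' i) t) :
    HasDerivAt (fun s => u s ⬝ᵥ v s) (u' ⬝ᵥ v t + u t ⬝ᵥ v') t := by
  rw [dotProduct, dotProduct, ← Finset.sum_add_distrib]
  exact HasDerivAt.fun_sum fun i _ => (hu i).fun_mul (hv i)

theorem hasDerivAt_mulVec {M : 𝕜 → Matrix m n 𝕜} {M' : Matrix m n 𝕜} {v : 𝕜 → n → 𝕜}
    {v' : n → 𝕜} (hM : ∀ i j, HasDerivAt (fun s => M s i j) (M' i j) t)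
    (hv : ∀ i, HasDerivAt (fun s => v s i) (v' i) t) (i : m) :
    HasDerivAt (fun s => (M s *ᵥ v s) i) ((M' *ᵥ v t + M t *ᵥ v') i) t :=
  hasDerivAt_dotProduct (hM i) hv

end Calculus

section QuadraticForm

variable {R n : Type*} [CommRing R] [Fintype n]

theorem dotProduct_mulVec_comm_of_transpose_eq {M : Matrix n n R} (hM : Mᵀ = M) (u v : n → R) :
    u ⬝ᵥ (M *ᵥ v) = v ⬝ᵥ (M *ᵥ u) := by
  rw [← dotProduct_transpose_mulVec, hM]

theorem dotProduct_sub_transpose_mulVec_self (N : Matrix n n R) (v : n → R) :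
    v ⬝ᵥ ((N - Nᵀ) *ᵥ v) = 0 := by
  rw [sub_mulVec, dotProduct_sub, dotProduct_transpose_mulVec, sub_self]

theorem riccati_quadratic_form_deriv_eq (A B C M : Matrix n n R) (hM : Mᵀ = M) (v : n → R) :
    ((C * M + Bᵀ) *ᵥ v) ⬝ᵥ (M *ᵥ v) +
        v ⬝ᵥ ((-A - B * M - M * Bᵀ - M * C * M) *ᵥ v + M *ᵥ ((C * M + Bᵀ) *ᵥ v)) =
      -(v ⬝ᵥ ((A - M * C * M) *ᵥ v)) := by
  have hskew : v ⬝ᵥ ((M * Bᵀ - B * M) *ᵥ v) = 0 := by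
    have hBM : (M * Bᵀ)ᵀ = B * M := by rw [transpose_mul, transpose_transpose, hM]
    rw [← hBM, dotProduct_sub_transpose_mulVec_self]
  calc _ = v ⬝ᵥ ((-(A - M * C * M) + (M * Bᵀ - B * M)) *ᵥ v) := by
        rw [dotProduct_mulVec_comm_of_transpose_eq hM, ← dotProduct_add, mulVec_mulVec, ← add_mulVec,
          ← add_mulVec]
        congr 2
        noncomm_ring
    _ = _ := by rw [add_mulVec, dotProduct_add, hskew, add_zero, neg_mulVec, dotProduct_neg]

end QuadraticForm

theorem riccati_quadratic_form_contraction_general {m : ℕ}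
    (A B C M : ℝ → Matrix (Fin m) (Fin m) ℝ)
    (x : ℝ → (Fin m → ℝ))
    (hMsymm : ∀ t, (M t)ᵀ = M t)
    (hM : ∀ t i j, HasDerivAt (fun s => M s i j)
      ((- A t - B t * M t - M t * (B t)ᵀ - M t * C t * M t) i j) t)
    (hx : ∀ t i, HasDerivAt (fun s => x s i) (((C t * M t + (B t)ᵀ) *ᵥ x t) i) t) :
    ∀ t, HasDerivAt (fun s => x s ⬝ᵥ (M s *ᵥ x s))
      (-(x t ⬝ᵥ ((A t - M t * C t * M t) *ᵥ x t))) t := by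
  intro t
  exact (hasDerivAt_dotProduct (hx t) (hasDerivAt_mulVec (hM t) (hx t))).congr_deriv
    (riccati_quadratic_form_deriv_eq _ _ _ _ (hMsymm t) _)

theorem riccati_quadratic_form_contraction {m : ℕ}
    (A B C M : ℝ → Matrix (Fin m) (Fin m) ℝ)
    (x : ℝ → (Fin m → ℝ))
    (hAsymm : ∀ t, (A t)ᵀ = A t)
    (hCsymm : ∀ t, (C t)ᵀ = C t)
    (hMsymm : ∀ t, (M t)ᵀ = M t)
    (hM : ∀ t i j, HasDerivAt (fun s => M s i j)
      ((- A t - B t * M t - M t * (B t)ᵀ - M t * C t * M t) i j) t)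
    (hx : ∀ t i, HasDerivAt (fun s => x s i) (((C t * M t + (B t)ᵀ) *ᵥ x t) i) t) :
    ∀ t, HasDerivAt (fun s => x s ⬝ᵥ (M s *ᵥ x s))
      (-(x t ⬝ᵥ ((A t - M t * C t * M t) *ᵥ x t))) t :=
  riccati_quadratic_form_contraction_general A B C M x hMsymm hM hx
end

section
/- Let T > 0, let a, b, c : ℝ → ℝ be continuous, and let f : ℝ → ℝ be differentiable on [0,T] and satisfy the scalar Riccati equation f′(t) = − a(t) − 2 b(t) f(t) − c(t) f(t)² for all t ∈ [0,T]. If a(t) < 0 for all t ∈ [0,T] and f(0) > 0, then f(t) > 0 for all t ∈ [0,T]. -/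
/-!
Positivity of a Riccati solution is a barrier argument: at the first zero `τ` of `f` the equation
reduces to `f'(τ) = -a(τ) > 0`, whereas `f > 0 = f(τ)` just before `τ` forces `f'(τ) ≤ 0`.
-/

open Set

theorem HasDerivWithinAt.nonpos_of_isMinOn_Icc {f : ℝ → ℝ} {f' a b : ℝ} (hab : a < b)
    (hmin : IsMinOn f (Icc a b) b) (hf : HasDerivWithinAt f f' (Icc a b) b) : f' ≤ 0 := by
  have hdir : a - b ∈ posTangentConeAt (Icc a b) b :=
    sub_mem_posTangentConeAt_of_segment_subset (by rw [segment_symm, segment_eq_Icc hab.le])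
  have hslope := hmin.localize.hasFDerivWithinAt_nonneg hf.hasFDerivWithinAt hdir
  rw [ContinuousLinearMap.toSpanSingleton_apply, smul_eq_mul] at hslope
  exact nonpos_of_mul_nonneg_right hslope (sub_neg.2 hab)

theorem exists_first_zero {f : ℝ → ℝ} {a b : ℝ} (hf : ContinuousOn f (Icc a b)) (ha : 0 < f a)
    {t : ℝ} (ht : t ∈ Icc a b) (hft : f t ≤ 0) :
    ∃ τ ∈ Ioc a b, f τ = 0 ∧ ∀ s ∈ Ico a τ, 0 < f s := by
  let Z : Set ℝ := Icc a b ∩ f ⁻¹' {0}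
  have hZ : Z.Nonempty := by
    obtain ⟨s, hs, hfs⟩ :=
      intermediate_value_Icc' ht.1 (hf.mono (Icc_subset_Icc_right ht.2)) ⟨hft, ha.le⟩
    exact ⟨s, ⟨hs.1, hs.2.trans ht.2⟩, hfs⟩
  have hZbdd : BddBelow Z := ⟨a, fun s hs => hs.1.1⟩
  have hτ : sInf Z ∈ Z :=
    (hf.preimage_isClosed_of_isClosed isClosed_Icc isClosed_singleton).csInf_mem hZ hZbdd
  refine ⟨sInf Z, ⟨lt_of_le_of_ne hτ.1.1 ?_, hτ.1.2⟩, hτ.2, fun s hs => ?_⟩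
  · intro haτ
    exact ha.ne' (haτ ▸ hτ.2)
  · by_contra! hfs
    have hsb : s ≤ b := hs.2.le.trans hτ.1.2
    obtain ⟨r, hr, hfr⟩ :=
      intermediate_value_Icc' hs.1 (hf.mono (Icc_subset_Icc_right hsb)) ⟨hfs, ha.le⟩
    have hτr : sInf Z ≤ r := csInf_le hZbdd ⟨⟨hr.1, hr.2.trans hsb⟩, hfr⟩
    exact (hτr.trans hr.2).not_gt hs.2

theorem pos_of_deriv_pos_of_eq_zero {f f' : ℝ → ℝ} {a b : ℝ}
    (hf : ∀ t ∈ Icc a b, HasDerivWithinAt f (f' t) (Icc a b) t) (ha : 0 < f a)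
    (hzero : ∀ t ∈ Icc a b, f t = 0 → 0 < f' t) : ∀ t ∈ Icc a b, 0 < f t := by
  intro t ht
  by_contra! hft
  have hcont : ContinuousOn f (Icc a b) := fun s hs => (hf s hs).continuousWithinAt
  obtain ⟨τ, hτ, hfτ, hpos⟩ := exists_first_zero hcont ha ht hft
  have hτIcc : τ ∈ Icc a b := Ioc_subset_Icc_self hτ
  have hmin : IsMinOn f (Icc a τ) τ := by
    intro s hs
    show f τ ≤ f s
    rcases hs.2.lt_or_eq with hsτ | rfl
    · exact hfτ ▸ (hpos s ⟨hs.1, hsτ⟩).le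
    · exact le_rfl
  have hderiv := (hf τ hτIcc).mono (Icc_subset_Icc_right hτ.2)
  exact (hderiv.nonpos_of_isMinOn_Icc hτ.1 hmin).not_gt (hzero τ hτIcc hfτ)

theorem scalar_riccati_positivity_general (T : ℝ)
    (a b c : ℝ → ℝ)
    (f : ℝ → ℝ)
    (hf : ∀ t ∈ Icc (0 : ℝ) T,
      HasDerivAt f (- a t - 2 * b t * f t - c t * (f t) ^ 2) t)
    (haneg : ∀ t ∈ Icc (0 : ℝ) T, a t < 0)
    (hf0 : 0 < f 0) :
    ∀ t ∈ Icc (0 : ℝ) T, 0 < f t := by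
  refine pos_of_deriv_pos_of_eq_zero (fun t ht => (hf t ht).hasDerivWithinAt) hf0 ?_
  intro t ht hft
  rw [hft]
  linarith [haneg t ht]

theorem scalar_riccati_positivity (T : ℝ) (hT : 0 < T)
    (a b c : ℝ → ℝ) (ha : Continuous a) (hb : Continuous b) (hc : Continuous c)
    (f : ℝ → ℝ)
    (hf : ∀ t ∈ Icc (0 : ℝ) T,
      HasDerivAt f (- a t - 2 * b t * f t - c t * (f t) ^ 2) t)
    (haneg : ∀ t ∈ Icc (0 : ℝ) T, a t < 0)
    (hf0 : 0 < f 0) :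
    ∀ t ∈ Icc (0 : ℝ) T, 0 < f t :=
  scalar_riccati_positivity_general T a b c f hf haneg hf0
end

section
/- For a real number a, write a₊ = max(a, 0) and a₋ = max(−a, 0). Let M be the real 3 × 3 matrix whose only nonzero entries are M₀₀ = a₊/2, M₁₀ = −a₊, M₁₁ = |a|/2, M₁₂ = −a₋, M₂₂ = a₋/2. Then for every x ∈ ℝ³, xᵀ M x ≥ 0; that is, the symmetric part of M is positive semi-definite. -/
open Matrix

/- With p = a₊ and q = a₋, so that |a| = p + q, the quadratic form of the block is
p/2 · (x₀ - x₁)² + q/2 · (x₁ - x₂)²: the half-divergence correction turns the upwind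
differences into exact squares. -/

theorem dotProduct_upwindBlock_mulVec (p q : ℝ) (x : Fin 3 → ℝ) :
    x ⬝ᵥ (!![p / 2, 0, 0; -p, (p + q) / 2, -q; 0, 0, q / 2] *ᵥ x) =
      p / 2 * (x 0 - x 1) ^ 2 + q / 2 * (x 1 - x 2) ^ 2 := by
  simp only [dotProduct, mulVec, Fin.sum_univ_three, of_apply, cons_val_zero, cons_val_one,
    cons_val_two, head_cons, tail_cons]
  ring

theorem dotProduct_upwindBlock_mulVec_nonneg {p q : ℝ} (hp : 0 ≤ p) (hq : 0 ≤ q)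
    (x : Fin 3 → ℝ) :
    0 ≤ x ⬝ᵥ (!![p / 2, 0, 0; -p, (p + q) / 2, -q; 0, 0, q / 2] *ᵥ x) := by
  rw [dotProduct_upwindBlock_mulVec]
  positivity

theorem upwind_block_psd (a : ℝ)
    (M : Matrix (Fin 3) (Fin 3) ℝ)
    (hM : M = !![max a 0 / 2,       0,               0;
                 -(max a 0),        |a| / 2,         -(max (-a) 0);
                 0,                 0,               max (-a) 0 / 2]) :
    ∀ x : Fin 3 → ℝ, 0 ≤ x ⬝ᵥ (M *ᵥ x) := by
  rw [hM, ← max_zero_add_max_neg_zero_eq_abs_self]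
  exact dotProduct_upwindBlock_mulVec_nonneg (le_max_right a 0) (le_max_right (-a) 0)
end

section
/- Let h : ℝ^m × ℝ^m × ℝ → ℝ, (p,x,t) ↦ h(p,x,t), be continuously differentiable, and let φ : ℝ^m × ℝ → ℝ be twice continuously differentiable (jointly in (x,t)) and satisfy the Hamilton–Jacobi equation ∂φ/∂t(x,t) + h(∇φ(x,t), x, t) = 0 for all (x,t). Let x̂ : ℝ → ℝ^m be differentiable and track the minimum of φ, i.e. ∇φ(x̂(t), t) = 0 for all t, and suppose the Hessian matrix P(t) = (∇∇φ)(x̂(t), t) is invertible for every t. Then x̂′(t) = ∇_p h(0, x̂(t), t) + P(t)⁻¹ ∇_x h(0, x̂(t), t) for all t. -/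
open Matrix RealInnerProductSpace

/-!
Write `D` for the second derivative of `φ` at `(x̂ t, t)` and `P` for its spatial block.
Differentiating `∇φ(x̂ s, s) = 0` in `s` gives `P x̂' = -∂ₜ∇φ`. Differentiating the
Hamilton–Jacobi equation in `x` at `x̂ t`, where `∇φ = 0` so that `h` is evaluated at `p = 0`,
gives `∇ₓ∂ₜφ = -(P ∇ₚh + ∇ₓh)`. The symmetry of `D` identifies the two mixed partials, hence
`P x̂' = P ∇ₚh + ∇ₓh`, and `P` is invertible.
-/

open ContinuousLinearMap InnerProductSpace

section Partial

variable {E F G K : Type*} [NormedAddCommGroup E] [NormedSpace ℝ E] [NormedAddCommGroup F]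
  [NormedSpace ℝ F] [NormedAddCommGroup G] [NormedSpace ℝ G] [NormedAddCommGroup K]
  [NormedSpace ℝ K] {f : E × F → G} {x : E} {y : F}

theorem HasFDerivAt.comp_prodMk_left {f' : E × F →L[ℝ] G} (hf : HasFDerivAt f f' (x, y)) :
    HasFDerivAt (fun z => f (z, y)) (f' ∘L inl ℝ E F) x :=
  hf.comp x (hasFDerivAt_prodMk_left x y)

theorem HasFDerivAt.comp_prodMk_right {f' : E × F →L[ℝ] G} (hf : HasFDerivAt f f' (x, y)) :
    HasFDerivAt (fun z => f (x, z)) (f' ∘L inr ℝ E F) y :=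
  hf.comp y (hasFDerivAt_prodMk_right x y)

theorem fderiv_comp_prodMk_left_apply (hf : DifferentiableAt ℝ f (x, y)) (u : E) :
    fderiv ℝ (fun z => f (z, y)) x u = fderiv ℝ f (x, y) (u, 0) := by
  rw [hf.hasFDerivAt.comp_prodMk_left.fderiv]
  rfl

theorem fderiv_comp_prodMk_right_apply (hf : DifferentiableAt ℝ f (x, y)) (v : F) :
    fderiv ℝ (fun z => f (x, z)) y v = fderiv ℝ f (x, y) (0, v) := by
  rw [hf.hasFDerivAt.comp_prodMk_right.fderiv]
  rfl

theorem fderiv_comp_prodMk_mid_apply {g : E × F × K → G} {z : K}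
    (hg : DifferentiableAt ℝ g (x, y, z)) (v : F) :
    fderiv ℝ (fun w => g (x, w, z)) y v = fderiv ℝ g (x, y, z) (0, v, 0) := by
  rw [fderiv_comp_prodMk_left_apply (f := fun q => g (x, q))
    hg.hasFDerivAt.comp_prodMk_right.differentiableAt, fderiv_comp_prodMk_right_apply hg]

theorem second_deriv_apply_eq_zero_of_critical_curve {φ : E × ℝ → ℝ} {γ : ℝ → E} {t : ℝ}
    {v : E} {D : E × ℝ →L[ℝ] E × ℝ →L[ℝ] ℝ} (hD : HasFDerivAt (fderiv ℝ φ) D (γ t, t))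
    (hγ : HasDerivAt γ v t) (hcrit : ∀ s u, fderiv ℝ φ (γ s, s) (u, 0) = 0) (u : E) :
    D (v, 1) (u, 0) = 0 := by
  have hcurve : HasDerivAt (fun s => fderiv ℝ φ (γ s, s) (u, 0)) (D (v, 1) (u, 0)) t :=
    (apply ℝ ℝ (u, (0 : ℝ))).hasFDerivAt.comp_hasDerivAt t
      (hD.comp_hasDerivAt (f := fun s => (γ s, s)) t (hγ.prodMk (hasDerivAt_id t)))
  simp only [hcrit] at hcurve
  exact hcurve.unique (hasDerivAt_const t 0)

end Partial

section InnerProduct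

variable {E : Type*} [NormedAddCommGroup E] [InnerProductSpace ℝ E]

theorem apply_eq_apply_add_of_hamiltonJacobi {D : E × ℝ →L[ℝ] E × ℝ →L[ℝ] ℝ} {A : E →L[ℝ] E}
    {L : E × E × ℝ →L[ℝ] ℝ} {v gp gx : E} (hsymm : ∀ a b, D a b = D b a)
    (hA : ∀ u w, ⟪A u, w⟫ = D (u, 0) (w, 0)) (hcurve : ∀ u, D (v, 1) (u, 0) = 0)
    (hHJ : ∀ u, D (u, 0) (0, 1) = -L (A u, u, 0)) (hgp : ∀ w, ⟪gp, w⟫ = L (w, 0, 0))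
    (hgx : ∀ u, ⟪gx, u⟫ = L (0, u, 0)) :
    A v = A gp + gx := by
  refine ext_inner_right ℝ fun u => ?_
  have htime : D (v, 0) (u, 0) = -D (0, 1) (u, 0) := by
    have := hcurve u
    rw [show ((v, 1) : E × ℝ) = (v, 0) + (0, 1) by simp, map_add, _root_.add_apply] at this
    linarith
  calc ⟪A v, u⟫ = -D (u, 0) (0, 1) := by rw [hA, htime, hsymm]
    _ = L (A u, 0, 0) + L (0, u, 0) := by rw [hHJ, neg_neg, ← map_add]; simp
    _ = ⟪A gp + gx, u⟫ := by rw [← hgp, ← hgx, inner_add_left, real_inner_comm, hA, hsymm, ← hA]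

end InnerProduct

section Gradient

variable {E F : Type*} [NormedAddCommGroup E] [InnerProductSpace ℝ E] [CompleteSpace E]
  [NormedAddCommGroup F] [NormedSpace ℝ F]

theorem exists_hasFDerivAt_gradient_comp_prodMk_left {φ : E × F → ℝ} {x : E} {t : F}
    {D : E × F →L[ℝ] E × F →L[ℝ] ℝ} (hφ : Differentiable ℝ φ)
    (hD : HasFDerivAt (fderiv ℝ φ) D (x, t)) :
    ∃ A : E →L[ℝ] E, HasFDerivAt (fun y => gradient (fun z => φ (z, t)) y) A x ∧
      ∀ u w, ⟪A u, w⟫ = D (u, 0) (w, 0) := by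
  have hslice : HasFDerivAt (fun y => fderiv ℝ φ (y, t)) (D ∘L inl ℝ E F) x :=
    HasFDerivAt.comp_prodMk_left (f := fderiv ℝ φ) (x := x) (y := t) hD
  have hrestrict := ((compL ℝ E (E × F) ℝ).flip (inl ℝ E F)).hasFDerivAt.comp x hslice
  have hgrad := (toDual ℝ E).symm.toContinuousLinearEquiv.toContinuousLinearMap.hasFDerivAt.comp x
    hrestrict
  refine ⟨_, hgrad.congr_of_eventuallyEq (Filter.Eventually.of_forall fun y => ?_),
    fun u w => toDual_symm_apply (𝕜 := ℝ)⟩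
  refine ext_inner_right ℝ fun w => ?_
  rw [inner_gradient_left, fderiv_comp_prodMk_left_apply (hφ (y, t))]
  exact (toDual_symm_apply (𝕜 := ℝ) (y := fderiv ℝ φ (y, t) ∘L inl ℝ E F)).symm

theorem second_deriv_time_eq_of_hamiltonJacobi {φ : E × ℝ → ℝ} {H : E × E × ℝ → ℝ} {x : E}
    {t : ℝ} {D : E × ℝ →L[ℝ] E × ℝ →L[ℝ] ℝ} {A : E →L[ℝ] E}
    (hD : HasFDerivAt (fderiv ℝ φ) D (x, t))
    (hA : HasFDerivAt (fun y => gradient (fun z => φ (z, t)) y) A x)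
    (hH : DifferentiableAt ℝ H (gradient (fun z => φ (z, t)) x, x, t))
    (hpde : ∀ y, fderiv ℝ φ (y, t) (0, 1) + H (gradient (fun z => φ (z, t)) y, y, t) = 0)
    (u : E) :
    D (u, 0) (0, 1) = -fderiv ℝ H (gradient (fun z => φ (z, t)) x, x, t) (A u, u, 0) := by
  have hslice : HasFDerivAt (fun y => fderiv ℝ φ (y, t)) (D ∘L inl ℝ E ℝ) x :=
    HasFDerivAt.comp_prodMk_left (f := fderiv ℝ φ) (x := x) (y := t) hD
  have htime : HasFDerivAt (fun y => fderiv ℝ φ (y, t) (0, 1))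
      (apply ℝ ℝ ((0 : E), (1 : ℝ)) ∘L D ∘L inl ℝ E ℝ) x :=
    (apply ℝ ℝ ((0 : E), (1 : ℝ))).hasFDerivAt.comp x hslice
  have hham : HasFDerivAt (fun y => -H (gradient (fun z => φ (z, t)) y, y, t))
      (-(fderiv ℝ H _ ∘L A.prod ((ContinuousLinearMap.id ℝ E).prod 0))) x :=
    (hH.hasFDerivAt.comp x (hA.prodMk ((hasFDerivAt_id x).prodMk (hasFDerivAt_const t x)))).neg
  simp only [fun y => eq_neg_of_add_eq_zero_left (hpde y)] at htime
  simpa using congrArg (· u) (htime.unique hham)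

end Gradient

section Matrix

variable {m : ℕ}

theorem toMatrix_mulVec_equiv (B : EuclideanSpace ℝ (Fin m) →L[ℝ] EuclideanSpace ℝ (Fin m))
    (w : EuclideanSpace ℝ (Fin m)) :
    (fun i j => B (EuclideanSpace.single j 1) i) *ᵥ EuclideanSpace.equiv (Fin m) ℝ w =
      EuclideanSpace.equiv (Fin m) ℝ (B w) := by
  classical
  let b := (EuclideanSpace.basisFun (Fin m) ℝ).toBasis
  have hmat : (fun i j => B (EuclideanSpace.single j 1) i) = LinearMap.toMatrix b b B := by
    ext i j
    simp [b, LinearMap.toMatrix_apply]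
  rw [hmat]
  exact LinearMap.toMatrix_mulVec_repr b b B.toLinearMap w

theorem hessMat_mulVec (ψ : EuclideanSpace ℝ (Fin m) → ℝ) (x w : EuclideanSpace ℝ (Fin m)) :
    hessMat ψ x *ᵥ EuclideanSpace.equiv (Fin m) ℝ w =
      EuclideanSpace.equiv (Fin m) ℝ (fderiv ℝ (fun y => gradient ψ y) x w) :=
  toMatrix_mulVec_equiv _ w

theorem eq_add_symm_inv_mulVec {P : Matrix (Fin m) (Fin m) ℝ}
    {A : EuclideanSpace ℝ (Fin m) →L[ℝ] EuclideanSpace ℝ (Fin m)} {v a b : EuclideanSpace ℝ (Fin m)}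
    (hP : IsUnit P)
    (hPA : ∀ w, P *ᵥ EuclideanSpace.equiv (Fin m) ℝ w = EuclideanSpace.equiv (Fin m) ℝ (A w))
    (h : A v = A a + b) :
    v = a + (EuclideanSpace.equiv (Fin m) ℝ).symm (P⁻¹ *ᵥ EuclideanSpace.equiv (Fin m) ℝ b) := by
  have hsolve : P *ᵥ EuclideanSpace.equiv (Fin m) ℝ (v - a) = EuclideanSpace.equiv (Fin m) ℝ b := by
    rw [hPA, map_sub, h, add_sub_cancel_left]
  rw [← hsolve, mulVec_mulVec, nonsing_inv_mul _ ((isUnit_iff_isUnit_det P).1 hP), one_mulVec,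
    ContinuousLinearEquiv.symm_apply_apply, add_sub_cancel]

end Matrix

theorem optimal_observer_dynamics {m : ℕ}
    (h : EuclideanSpace ℝ (Fin m) → EuclideanSpace ℝ (Fin m) → ℝ → ℝ)
    (φ : EuclideanSpace ℝ (Fin m) × ℝ → ℝ)
    (xhat : ℝ → EuclideanSpace ℝ (Fin m))
    (hh : ContDiff ℝ 1 (fun q : EuclideanSpace ℝ (Fin m) × EuclideanSpace ℝ (Fin m) × ℝ =>
      h q.1 q.2.1 q.2.2))
    (hφ : ContDiff ℝ 2 φ)
    (hpde : ∀ y t, deriv (fun s => φ (y, s)) t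
      + h (gradient (fun z => φ (z, t)) y) y t = 0)
    (hxhat : Differentiable ℝ xhat)
    (hmin : ∀ t, gradient (fun y => φ (y, t)) (xhat t) = 0)
    (P : ℝ → Matrix (Fin m) (Fin m) ℝ)
    (hP : ∀ t, P t = hessMat (fun y => φ (y, t)) (xhat t))
    (hPinv : ∀ t, IsUnit (P t)) :
    ∀ t, HasDerivAt xhat
      (gradient (fun p => h p (xhat t) t) 0
        + (EuclideanSpace.equiv (Fin m) ℝ).symm
            ((P t)⁻¹ *ᵥ (EuclideanSpace.equiv (Fin m) ℝ)
              (gradient (fun y => h 0 y t) (xhat t)))) t := by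
  intro t
  have hφd : Differentiable ℝ φ := hφ.differentiable two_ne_zero
  have hhd := hh.differentiable one_ne_zero
  have hD := ((hφ.fderiv_right (m := 1) le_rfl).differentiable one_ne_zero (xhat t, t)).hasFDerivAt
  obtain ⟨A, hA, hAinner⟩ := exists_hasFDerivAt_gradient_comp_prodMk_left hφd hD
  have hcurve := second_deriv_apply_eq_zero_of_critical_curve hD (hxhat t).hasDerivAt
    fun s u => by
      rw [← fderiv_comp_prodMk_left_apply (hφd _), ← inner_gradient_left, hmin, inner_zero_left]
  have hHJ := second_deriv_time_eq_of_hamiltonJacobi hD hA (hhd _) fun y => by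
    rw [← fderiv_comp_prodMk_right_apply (hφd _)]
    exact hpde y t
  rw [hmin t] at hHJ
  have hvel := apply_eq_apply_add_of_hamiltonJacobi (hφ.contDiffAt.isSymmSndFDerivAt (by simp))
    hAinner hcurve hHJ
    (fun w => inner_gradient_left.trans (fderiv_comp_prodMk_left_apply (hhd _) w))
    (fun u => inner_gradient_left.trans (fderiv_comp_prodMk_mid_apply (hhd _) u))
  rw [← eq_add_symm_inv_mulVec (hPinv t) (fun w => by rw [hP t, hessMat_mulVec, hA.fderiv]) hvel]
  exact (hxhat t).hasDerivAt
end
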